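/- arXiv:math/0608607 — 13 statements merged into one kernel-verified Lean document; each statement's English description precedes it below -/
import Mathlib

section
/- No paperfolding word contains a subword of the form xx with |x| = 2^k for any k ≥ 1. -/
/-- `x` occurs as a subword (contiguous block) of the infinite word `f`. -/
def IsSubword {α : Type*} (f : ℕ → α) (x : List α) : Prop :=
  ∃ i, x = (List.range x.length).map fun m => f (i + m)

/-- `f` is a paperfolding word: there is a sequence of words `g k` (with `g 0 = f`),
each satisfying the defining recursion with constant `a k`, and each `g (k+1)`
being the odd-indexed subsequence of `g k`. -/
def IsPaperfolding (f : ℕ → Bool) : Prop :=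
  ∃ (g : ℕ → ℕ → Bool) (a : ℕ → Bool), g 0 = f ∧
    ∀ k, (∀ n, g k (4 * n) = a k) ∧ (∀ n, g k (4 * n + 2) = !(a k)) ∧
      ∀ n, g (k + 1) n = g k (2 * n + 1)

lemma pf_even_ne {f : ℕ → Bool} {a : Bool}
    (h0 : ∀ n, f (4 * n) = a) (h2 : ∀ n, f (4 * n + 2) = !a) :
    ∀ n, f (2 * n) ≠ f (2 * n + 2) := by
  intro n
  rcases Nat.even_or_odd n with ⟨m, hm⟩ | ⟨m, hm⟩
  · have e1 : 2 * n = 4 * m := by omega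
    have e2 : 2 * n + 2 = 4 * m + 2 := by omega
    rw [e2, e1, h0, h2]; simp
  · have e1 : 2 * n = 4 * m + 2 := by omega
    have e2 : 2 * n + 2 = 4 * (m + 1) := by omega
    rw [e2, e1, h0, h2]; simp

lemma pf_key : ∀ k, 1 ≤ k → ∀ f : ℕ → Bool, IsPaperfolding f →
    ∀ i, ¬ (∀ m, m < 2 ^ k → f (i + m) = f (i + 2 ^ k + m)) := by
  intro k hk
  induction k, hk using Nat.le_induction with
  | base =>
    intro f hf i h
    obtain ⟨g, a, hg0, hg⟩ := hf
    obtain ⟨h0, h2, _⟩ := hg 0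
    rw [hg0] at h0 h2
    have h01 : f i = f (i + 2) := by
      have := h 0 (by norm_num); simpa using this
    have h11 : f (i + 1) = f (i + 3) := by
      have := h 1 (by norm_num)
      simpa [show i + 2 ^ 1 + 1 = i + 3 by ring] using this
    rcases Nat.even_or_odd i with ⟨t, ht⟩ | ⟨t, ht⟩
    · exact pf_even_ne h0 h2 t
        (by rw [show 2 * t + 2 = i + 2 by omega, show 2 * t = i by omega]; exact h01)
    · exact pf_even_ne h0 h2 (t + 1)
        (by rw [show 2 * (t + 1) + 2 = i + 3 by omega,
              show 2 * (t + 1) = i + 1 by omega]; exact h11)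
  | succ k hk ih =>
    intro f hf i h
    obtain ⟨g, a, hg0, hg⟩ := hf
    have hrec : ∀ n, g 1 n = f (2 * n + 1) := by
      intro n; rw [← hg0]; exact (hg 0).2.2 n
    have hpf1 : IsPaperfolding (g 1) :=
      ⟨fun j => g (j + 1), fun j => a (j + 1), rfl, fun j => hg (j + 1)⟩
    have hP : 2 ^ (k + 1) = 2 * 2 ^ k := by ring
    rcases Nat.even_or_odd i with ⟨t, ht⟩ | ⟨t, ht⟩
    · apply ih (g 1) hpf1 t
      intro j hj
      rw [hrec, hrec]
      have e1 : 2 * (t + j) + 1 = i + (2 * j + 1) := by omega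
      have e2 : 2 * (t + 2 ^ k + j) + 1 = i + 2 ^ (k + 1) + (2 * j + 1) := by
        rw [hP]; omega
      rw [e1, e2]
      exact h (2 * j + 1) (by rw [hP]; omega)
    · apply ih (g 1) hpf1 t
      intro j hj
      rw [hrec, hrec]
      have e1 : 2 * (t + j) + 1 = i + 2 * j := by omega
      have e2 : 2 * (t + 2 ^ k + j) + 1 = i + 2 ^ (k + 1) + 2 * j := by
        rw [hP]; omega
      rw [e1, e2]
      exact h (2 * j) (by rw [hP]; omega)

/-- No paperfolding word contains a square `xx` with `|x| = 2^k`, `k ≥ 1`. -/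
theorem paperfolding_no_square_of_length_pow_two
    (f : ℕ → Bool) (hf : IsPaperfolding f) (k : ℕ) (hk : 1 ≤ k)
    (x : List Bool) (hx : x.length = 2 ^ k) :
    ¬ IsSubword f (x ++ x) := by
  rintro ⟨i, hi⟩
  apply pf_key k hk f hf i
  intro m hm
  have hm' : m < x.length := by rwa [hx]
  have hval : ∀ j (hj : j < (x ++ x).length), (x ++ x)[j] = f (i + j) := by
    intro j hj
    rw [List.getElem_of_eq hi hj]
    simp
  have hlen : (x ++ x).length = x.length + x.length := by simp
  have hj1 : m < (x ++ x).length := by omega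
  have hj2 : x.length + m < (x ++ x).length := by omega
  have e1 : (x ++ x)[m]'hj1 = x[m] := List.getElem_append_left hm'
  have e2 : (x ++ x)[x.length + m]'hj2 = x[m] := by
    rw [List.getElem_append_right (by omega)]
    congr 1; omega
  have := (hval m hj1).symm.trans ((e1.trans e2.symm).trans (hval (x.length + m) hj2))
  rwa [hx, ← Nat.add_assoc] at this
end

section
/- If a paperfolding word contains a subword of the form wcw, where w is a nonempty word and c is a single letter, then either |w| ∈ {2,4} or |w| = 2^k − 1 for some k ≥ 1. -/
/-- A "wcw" pattern of length `L` starting somewhere in `f`: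
positions `i..i+L-1` agree with positions `i+L+1..i+2L`. -/
def HasWCW (f : ℕ → Bool) (L : ℕ) : Prop :=
  ∃ i, ∀ m < L, f (i + m) = f (i + (L + 1) + m)

/-- A square of period `M` somewhere in `f`. -/
def HasSq (f : ℕ → Bool) (M : ℕ) : Prop :=
  ∃ i, ∀ m < M, f (i + m) = f (i + M + m)

lemma evenVal {h : ℕ → Bool} {b : Bool} (h4 : ∀ n, h (4 * n) = b)
    (h42 : ∀ n, h (4 * n + 2) = !b) (n : ℕ) :
    h (2 * n) = xor (decide (n % 2 = 1)) b := by
  rcases Nat.even_or_odd n with ⟨m, hm⟩ | ⟨m, hm⟩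
  · have e1 : 2 * n = 4 * m := by omega
    have e2 : n % 2 = 0 := by omega
    rw [e1, h4, e2]; simp
  · have e1 : 2 * n = 4 * m + 2 := by omega
    have e2 : n % 2 = 1 := by omega
    rw [e1, h42, e2]; simp

lemma evenCmp {h : ℕ → Bool} {b : Bool} (h4 : ∀ n, h (4 * n) = b)
    (h42 : ∀ n, h (4 * n + 2) = !b) (n m : ℕ) :
    (h (2 * n) = h (2 * m)) ↔ n % 2 = m % 2 := by
  rw [evenVal h4 h42, evenVal h4 h42]
  cases b <;> simp [decide_eq_decide] <;> omega

/-- No paperfolding word contains a square of even period (except trivially `0`). -/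
lemma no_even_sq (M : ℕ) : ∀ (f : ℕ → Bool), IsPaperfolding f → HasSq f M → M % 2 = 0 → M = 0 := by
  induction M using Nat.strong_induction_on with
  | _ M ih =>
    intro f hf hsq hM2
    by_contra hM0
    have hM : 2 ≤ M := by omega
    obtain ⟨i, hsq⟩ := hsq
    obtain ⟨g, a, hg0, hk⟩ := hf
    subst hg0
    have h4 := (hk 0).1
    have h42 := (hk 0).2.1
    have hrec := (hk 0).2.2
    have hpf1 : IsPaperfolding (g 1) :=
      ⟨fun k => g (k + 1), fun k => a (k + 1), rfl, fun k => hk (k + 1)⟩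
    obtain ⟨t, ht⟩ : ∃ t, i + i % 2 = 2 * t := ⟨(i + i % 2) / 2, by omega⟩
    have e2 : i + M + i % 2 = 2 * (t + M / 2) := by omega
    have hcmp := (evenCmp h4 h42 t (t + M / 2)).mp
      (by rw [← ht, ← e2]; exact hsq (i % 2) (by omega))
    have hM4 : (M / 2) % 2 = 0 := by omega
    have hkey : ∀ m < M / 2, g 1 (i / 2 + m) = g 1 (i / 2 + M / 2 + m) := by
      intro j hj
      rw [hrec, hrec]
      rcases Nat.even_or_odd i with ⟨v, hv⟩ | ⟨v, hv⟩
      · have e1' : 2 * (i / 2 + j) + 1 = i + (2 * j + 1) := by omega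
        have e2' : 2 * (i / 2 + M / 2 + j) + 1 = i + M + (2 * j + 1) := by omega
        rw [e1', e2']; exact hsq _ (by omega)
      · have e1' : 2 * (i / 2 + j) + 1 = i + 2 * j := by omega
        have e2' : 2 * (i / 2 + M / 2 + j) + 1 = i + M + 2 * j := by omega
        rw [e1', e2']; exact hsq _ (by omega)
    have := ih (M / 2) (by omega) (g 1) hpf1 ⟨i / 2, hkey⟩ hM4
    omega

/-- Main combinatorial lemma: a wcw pattern of length `L ≥ 1` in a paperfolding word
forces `L ∈ {2,4}` or `L = 2^k - 1`. -/
lemma main_wcw (L : ℕ) : ∀ (f : ℕ → Bool), IsPaperfolding f → HasWCW f L → 1 ≤ L →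
    L = 2 ∨ L = 4 ∨ ∃ k, 1 ≤ k ∧ L = 2 ^ k - 1 := by
  induction L using Nat.strong_induction_on with
  | _ L ih =>
    intro f hf hwcw hL1
    obtain ⟨i, hw⟩ := hwcw
    obtain ⟨g, a, hg0, hk⟩ := hf
    subst hg0
    have h4 := (hk 0).1
    have h42 := (hk 0).2.1
    have hrec := (hk 0).2.2
    have h4' := (hk 1).1
    have h42' := (hk 1).2.1
    have hpf1 : IsPaperfolding (g 1) :=
      ⟨fun k => g (k + 1), fun k => a (k + 1), rfl, fun k => hk (k + 1)⟩
    rcases Nat.even_or_odd L with ⟨l, hl⟩ | ⟨u, hu⟩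
    · -- L even
      by_cases h24 : L = 2 ∨ L = 4
      · rcases h24 with h | h
        · exact Or.inl h
        · exact Or.inr (Or.inl h)
      · exfalso
        have hl3 : 3 ≤ l := by omega
        have factA : ∀ j < l, g 1 (i / 2 + j) = g 0 (2 * (i / 2 + j + l + 1)) := by
          intro j hj
          rw [hrec]
          have e1 : 2 * (i / 2 + j) + 1 = i + (2 * j + 1 - i % 2) := by omega
          have e2 : i + (L + 1) + (2 * j + 1 - i % 2) = 2 * (i / 2 + j + l + 1) := by omega
          rw [e1, ← e2]
          exact hw _ (by omega)
        have factB : ∀ j < l, g 1 (i / 2 + i % 2 + j + l) = g 0 (2 * (i / 2 + i % 2 + j)) := by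
          intro j hj
          rw [hrec]
          have e1 : 2 * (i / 2 + i % 2 + j + l) + 1 = i + (L + 1) + (i % 2 + 2 * j) := by omega
          have e2 : i + (i % 2 + 2 * j) = 2 * (i / 2 + i % 2 + j) := by omega
          rw [e1, ← e2]
          exact (hw _ (by omega)).symm
        rcases Nat.even_or_odd (i / 2) with ⟨v, hv⟩ | ⟨v, hv⟩
        · have hA0 := factA 0 (by omega)
          have hA2 := factA 2 (by omega)
          have hcross := (evenCmp h4 h42 (i / 2 + 0 + l + 1) (i / 2 + 2 + l + 1)).mpr (by omega)
          have hg1eq : g 1 (i / 2 + 0) = g 1 (i / 2 + 2) := by rw [hA0, hA2]; exact hcross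
          have e0 : i / 2 + 0 = 2 * v := by omega
          have e2' : i / 2 + 2 = 2 * (v + 1) := by omega
          rw [e0, e2'] at hg1eq
          have := (evenCmp h4' h42' v (v + 1)).mp hg1eq
          omega
        · by_cases hl4 : 4 ≤ l
          · have hA1 := factA 1 (by omega)
            have hA3 := factA 3 (by omega)
            have hcross := (evenCmp h4 h42 (i / 2 + 1 + l + 1) (i / 2 + 3 + l + 1)).mpr (by omega)
            have hg1eq : g 1 (i / 2 + 1) = g 1 (i / 2 + 3) := by rw [hA1, hA3]; exact hcross
            have e0 : i / 2 + 1 = 2 * (v + 1) := by omega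
            have e2' : i / 2 + 3 = 2 * (v + 2) := by omega
            rw [e0, e2'] at hg1eq
            have := (evenCmp h4' h42' (v + 1) (v + 2)).mp hg1eq
            omega
          · have hl3' : l = 3 := by omega
            rcases Nat.even_or_odd i with ⟨x, hx⟩ | ⟨x, hx⟩
            · have hB0 := factB 0 (by omega)
              have hB2 := factB 2 (by omega)
              have hcross := (evenCmp h4 h42 (i / 2 + i % 2 + 0) (i / 2 + i % 2 + 2)).mpr (by omega)
              have hg1eq : g 1 (i / 2 + i % 2 + 0 + l) = g 1 (i / 2 + i % 2 + 2 + l) := by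
                rw [hB0, hB2]; exact hcross
              have e0 : i / 2 + i % 2 + 0 + l = 2 * (v + 2) := by omega
              have e2' : i / 2 + i % 2 + 2 + l = 2 * (v + 3) := by omega
              rw [e0, e2'] at hg1eq
              have := (evenCmp h4' h42' (v + 2) (v + 3)).mp hg1eq
              omega
            · have hA1 := factA 1 (by omega)
              have hB1 := factB 1 (by omega)
              have hst := (evenCmp h4' h42' (v + 1) (v + 3)).mpr (by omega)
              have e1 : 2 * (v + 1) = i / 2 + 1 := by omega
              have e5 : 2 * (v + 3) = i / 2 + i % 2 + 1 + l := by omega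
              rw [e1, e5] at hst
              rw [hA1, hB1] at hst
              have := (evenCmp h4 h42 (i / 2 + 1 + l + 1) (i / 2 + i % 2 + 1)).mp hst
              omega
    · -- L odd
      by_cases h1 : L = 1
      · exact Or.inr (Or.inr ⟨1, le_refl 1, by omega⟩)
      · have hL3 : 3 ≤ L := by omega
        obtain ⟨t, ht⟩ : ∃ t, i + i % 2 = 2 * t := ⟨(i + i % 2) / 2, by omega⟩
        have e2 : i + (L + 1) + i % 2 = 2 * (t + (u + 1)) := by omega
        have hcmp := (evenCmp h4 h42 t (t + (u + 1))).mp
          (by rw [← ht, ← e2]; exact hw (i % 2) (by omega))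
        have hM'even : (u + 1) % 2 = 0 := by omega
        rcases Nat.even_or_odd i with ⟨v, hv⟩ | ⟨v, hv⟩
        · -- i even : wcw of length u in g 1
          have hkey : ∀ j < u, g 1 (i / 2 + j) = g 1 (i / 2 + (u + 1) + j) := by
            intro j hj
            rw [hrec, hrec]
            have e1' : 2 * (i / 2 + j) + 1 = i + (2 * j + 1) := by omega
            have e2' : 2 * (i / 2 + (u + 1) + j) + 1 = i + (L + 1) + (2 * j + 1) := by omega
            rw [e1', e2']; exact hw _ (by omega)
          have hu1 : 1 ≤ u := by omega
          rcases ih u (by omega) (g 1) hpf1 ⟨i / 2, hkey⟩ hu1 with h2 | h4c | ⟨k, hk1, hk2⟩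
          · omega
          · omega
          · refine Or.inr (Or.inr ⟨k + 1, by omega, ?_⟩)
            have hp : 2 ^ (k + 1) = 2 * 2 ^ k := by ring
            have hp1 : 1 ≤ 2 ^ k := Nat.one_le_two_pow
            omega
        · -- i odd : square of period u+1 in g 1
          have hkey : ∀ j < u + 1, g 1 (i / 2 + j) = g 1 (i / 2 + (u + 1) + j) := by
            intro j hj
            rw [hrec, hrec]
            have e1' : 2 * (i / 2 + j) + 1 = i + 2 * j := by omega
            have e2' : 2 * (i / 2 + (u + 1) + j) + 1 = i + (L + 1) + 2 * j := by omega
            rw [e1', e2']; exact hw _ (by omega)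
          have := no_even_sq (u + 1) (g 1) hpf1 ⟨i / 2, hkey⟩ hM'even
          omega

/-- If a paperfolding word contains a subword `w ++ [c] ++ w` with `w` nonempty,
then `|w| ∈ {2,4}` or `|w| = 2^k - 1` for some `k ≥ 1`. -/
theorem paperfolding_wcw_lengths
    (f : ℕ → Bool) (hf : IsPaperfolding f)
    (w : List Bool) (c : Bool) (hw : w ≠ [])
    (hsub : IsSubword f (w ++ [c] ++ w)) :
    w.length = 2 ∨ w.length = 4 ∨ ∃ k, 1 ≤ k ∧ w.length = 2 ^ k - 1 := by
  have hwcw : HasWCW f w.length := by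
    obtain ⟨i, hx⟩ := hsub
    refine ⟨i, fun m hm => ?_⟩
    set L := w.length with hLdef
    have hlen : (w ++ [c] ++ w).length = L + 1 + L := by simp [hLdef]; omega
    have hq : ∀ k, k < L + 1 + L → (w ++ [c] ++ w)[k]? = some (f (i + k)) := by
      intro k hk
      conv_lhs => rw [hx]
      rw [List.getElem?_map, List.getElem?_range (by omega)]
      rfl
    have h1 : (w ++ [c] ++ w)[m]? = w[m]? := by
      rw [List.getElem?_append_left (by simp [hLdef]; omega),
          List.getElem?_append_left (by omega)]
    have h2 : (w ++ [c] ++ w)[L + 1 + m]? = w[m]? := by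
      rw [List.getElem?_append_right (by simp [hLdef])]
      congr 1
      simp [hLdef]
    have hqm := hq m (by omega)
    have hqk := hq (L + 1 + m) (by omega)
    rw [h1] at hqm
    rw [h2] at hqk
    have h3 : i + (L + 1) + m = i + (L + 1 + m) := by omega
    rw [h3]
    exact Option.some.inj (hqm.symm.trans hqk)
  exact main_wcw w.length f hf hwcw (by
    have := List.length_pos_iff.mpr hw
    omega)
end

section
/- For every k ≥ 1, every paperfolding word contains a subword of the form wcw where w is nonempty, c is a single letter, and |w| = 2^k − 1. -/
lemma pf_run (g : ℕ → ℕ → Bool) (a : ℕ → Bool)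
    (hg : ∀ k, (∀ n, g k (4 * n) = a k) ∧ (∀ n, g k (4 * n + 2) = !(a k)) ∧
      ∀ n, g (k + 1) n = g k (2 * n + 1)) :
    ∀ K, 1 ≤ K → ∀ ℓ, ∃ i, ∀ m < 2 ^ K - 1, g ℓ (i + m) = g ℓ (i + m + 2 ^ K) := by
  intro K
  induction K with
  | zero => omega
  | succ K ih =>
    intro _ ℓ
    rcases Nat.eq_or_lt_of_le (Nat.one_le_iff_ne_zero.mpr (Nat.succ_ne_zero K)) with h1 | h1
    · -- K = 0, base case
      have hK : K = 0 := by omega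
      subst hK
      obtain ⟨h0, h2, hodd⟩ := hg (ℓ + 1)
      obtain ⟨_, _, hoddℓ⟩ := hg ℓ
      have e0 : g (ℓ+1) 0 = a (ℓ+1) := by simpa using h0 0
      have e2 : g (ℓ+1) 2 = !(a (ℓ+1)) := by simpa using h2 0
      by_cases hc : g (ℓ+1) 1 = g (ℓ+1) 0
      · refine ⟨1, ?_⟩
        intro m hm
        interval_cases m
        have := hoddℓ 0
        have := hoddℓ 1
        simp only [Nat.mul_zero, Nat.mul_one] at *
        rw [show (1:ℕ) + 0 = 2*0+1 by ring, show (1:ℕ) + 0 + 2^1 = 2*1+1 by ring,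
          ← hoddℓ 0, ← hoddℓ 1]
        rw [hc, e0]
      · refine ⟨3, ?_⟩
        intro m hm
        interval_cases m
        rw [show (3:ℕ) + 0 = 2*1+1 by ring, show (3:ℕ) + 0 + 2^1 = 2*2+1 by ring,
          ← hoddℓ 1, ← hoddℓ 2]
        cases hb : g (ℓ+1) 1 <;> cases hb2 : a (ℓ+1) <;>
          simp [hb, hb2, e0, e2] at *
    · -- K ≥ 1
      have hK1 : 1 ≤ K := by omega
      obtain ⟨i', hi'⟩ := ih hK1 (ℓ + 1)
      obtain ⟨h0, h2, hoddℓ⟩ := hg ℓ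
      refine ⟨2 * i', ?_⟩
      have heven : ∀ j j' : ℕ, j % 2 = j' % 2 → g ℓ (2 * j) = g ℓ (2 * j') := by
        intro j j' hjj
        rcases Nat.even_or_odd j with ⟨n, hn⟩ | ⟨n, hn⟩
        · obtain ⟨n', hn'⟩ : Even j' := by
            rcases Nat.even_or_odd j' with h | h
            · exact h
            · exfalso; rcases h with ⟨n', hn'⟩; omega
          rw [show 2 * j = 4 * n by omega, show 2 * j' = 4 * n' by omega, h0, h0]
        · obtain ⟨n', hn'⟩ : Odd j' := by
            rcases Nat.even_or_odd j' with h | h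
            · exfalso; rcases h with ⟨n', hn'⟩; omega
            · exact h
          rw [show 2 * j = 4 * n + 2 by omega, show 2 * j' = 4 * n' + 2 by omega, h2, h2]
      intro m hm
      rcases Nat.even_or_odd m with ⟨t, ht⟩ | ⟨t, ht⟩
      · -- m even: automatic since 4 ∣ 2^(K+1)
        have : 2 * i' + m = 2 * (i' + t) := by omega
        rw [this, show 2 * (i' + t) + 2 ^ (K+1) = 2 * (i' + t + 2 ^ K) by
          rw [pow_succ]; ring]
        apply heven
        have : 2 ^ K % 2 = 0 := by
          have : (2:ℕ) ∣ 2 ^ K := dvd_pow_self 2 (by omega)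
          omega
        omega
      · -- m odd: use inner run
        have htlt : t < 2 ^ K - 1 := by
          have : 2 ^ (K+1) = 2 * 2 ^ K := by rw [pow_succ]; ring
          omega
        have e1 : 2 * i' + m = 2 * (i' + t) + 1 := by omega
        have e2' : 2 * i' + m + 2 ^ (K+1) = 2 * (i' + t + 2 ^ K) + 1 := by
          rw [pow_succ]; omega
        rw [e1, show 2 * (i' + t) + 1 + 2 ^ (K+1) = 2 * (i' + t + 2 ^ K) + 1 from by
          rw [pow_succ]; omega, ← hoddℓ (i' + t), ← hoddℓ (i' + t + 2 ^ K)]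
        exact hi' t htlt

/-- For every `k ≥ 1`, every paperfolding word contains a subword `w ++ [c] ++ w`
with `w` nonempty and `|w| = 2^k - 1`. -/
theorem paperfolding_contains_wcw
    (f : ℕ → Bool) (hf : IsPaperfolding f) (k : ℕ) (hk : 1 ≤ k) :
    ∃ (w : List Bool) (c : Bool), w ≠ [] ∧ w.length = 2 ^ k - 1 ∧
      IsSubword f (w ++ [c] ++ w) := by
  obtain ⟨g, a, hg0, hg⟩ := hf
  obtain ⟨i, hi⟩ := pf_run g a hg k hk 0
  rw [hg0] at hi
  set L := 2 ^ k - 1 with hL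
  have hLpos : 0 < L := by
    have : 2 ≤ 2 ^ k := Nat.one_lt_two_pow_iff.mpr (by omega)
    omega
  have hLsucc : L + 1 = 2 ^ k := by
    have : 1 ≤ 2 ^ k := Nat.one_le_two_pow
    omega
  refine ⟨(List.range L).map (fun m => f (i + m)), f (i + L), ?_, by simp, ⟨i, ?_⟩⟩
  · simp [hLpos.ne']
  · apply List.ext_getElem
    · simp
    · intro n h1 h2
      simp only [List.getElem_map, List.getElem_range]
      have hlen : ((List.range L).map (fun m => f (i+m)) ++ [f (i+L)]).length = L + 1 := by
        simp
      rcases lt_trichotomy n L with hn | hn | hn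
      · rw [List.getElem_append_left (by rw [hlen]; omega),
          List.getElem_append_left (by simpa using hn)]
        simp
      · subst hn
        rw [List.getElem_append_left (by rw [hlen]; omega),
          List.getElem_append_right (by simp)]
        simp
      · have hn2 : n - (L + 1) < L := by
          simp only [List.length_append, List.length_map, List.length_range,
            List.length_singleton] at h1
          omega
        rw [List.getElem_append_right (by rw [hlen]; omega)]
        simp only [hlen, List.getElem_map, List.getElem_range]
        rw [hi _ hn2, ← hLsucc]
        congr 1
        omega
end

section
/- If xx is a nonempty square subword of a paperfolding word, then |x| ∈ {1, 3, 5}. -/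
/-- No alternating block of length 4 in a word with the paperfolding 4-pattern. -/
lemma pf_alt4 (g1 : ℕ → Bool) (a1 : Bool)
    (h0 : ∀ n, g1 (4 * n) = a1) (h2 : ∀ n, g1 (4 * n + 2) = !a1)
    (m : ℕ) (h01 : g1 m ≠ g1 (m + 1)) (h12 : g1 (m + 1) ≠ g1 (m + 2))
    (h23 : g1 (m + 2) ≠ g1 (m + 3)) : False := by
  have key : ∀ e, e % 2 = 0 → g1 e = g1 (e + 2) → False := by
    intro e he heq
    rcases Nat.even_or_odd (e / 2) with ⟨k, hk⟩ | ⟨k, hk⟩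
    · have h4 : e = 4 * k := by omega
      have h4' : e + 2 = 4 * k + 2 := by omega
      rw [h4', h2] at heq; rw [h4, h0] at heq
      simp at heq
    · have h4 : e = 4 * k + 2 := by omega
      have h4' : e + 2 = 4 * (k + 1) := by omega
      rw [h4', h0] at heq; rw [h4, h2] at heq
      simp at heq
  have e1 : g1 m = g1 (m + 2) := by
    cases hb : g1 m <;> cases hb1 : g1 (m+1) <;> cases hb2 : g1 (m+2) <;> simp_all
  have e2 : g1 (m + 1) = g1 (m + 3) := by
    cases hb : g1 (m+1) <;> cases hb1 : g1 (m+2) <;> cases hb2 : g1 (m+3) <;> simp_all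
  rcases Nat.even_or_odd m with ⟨k, hk⟩ | ⟨k, hk⟩
  · exact key m (by omega) e1
  · exact key (m + 1) (by omega) (by simpa using e2)

/-- Main combinatorial lemma: a paperfolding word has no square of period `p`
unless `p ∈ {0,1,3,5}`. -/
lemma pf_period (p : ℕ) : ∀ (f : ℕ → Bool), IsPaperfolding f →
    (∃ i, ∀ m < p, f (i + m) = f (i + m + p)) →
    p = 0 ∨ p = 1 ∨ p = 3 ∨ p = 5 := by
  induction p using Nat.strong_induction_on with
  | _ p IH =>
  intro f hf ⟨i, h⟩
  obtain ⟨g, a, hg0, hgk⟩ := hf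
  have h4 : ∀ n, f (4 * n) = a 0 := by intro n; rw [← hg0]; exact (hgk 0).1 n
  have h42 : ∀ n, f (4 * n + 2) = !a 0 := by intro n; rw [← hg0]; exact (hgk 0).2.1 n
  have hodd : ∀ n, f (2 * n + 1) = g 1 n := by
    intro n; rw [← hg0]; exact ((hgk 0).2.2 n).symm
  have evenVal0 : ∀ u, u % 4 = 0 → f u = a 0 := by
    intro u hu
    have e : u = 4 * (u / 4) := by omega
    rw [e, h4]
  have evenVal2 : ∀ u, u % 4 = 2 → f u = !a 0 := by
    intro u hu
    have e : u = 4 * (u / 4) + 2 := by omega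
    rw [e, h42]
  have evenNe' : ∀ u v, u % 2 = 0 → v % 2 = 0 → u % 4 ≠ v % 4 → f u ≠ f v := by
    intro u v hu hv huv
    have hu4 : u % 4 = 0 ∨ u % 4 = 2 := by omega
    have hv4 : v % 4 = 0 ∨ v % 4 = 2 := by omega
    rcases hu4 with h1 | h1 <;> rcases hv4 with h2 | h2
    · omega
    · rw [evenVal0 u h1, evenVal2 v h2]; simp
    · rw [evenVal2 u h1, evenVal0 v h2]; simp
    · omega
  have evenNe : ∀ u, u % 2 = 0 → f u ≠ f (u + 2) := by
    intro u hu
    exact evenNe' u (u + 2) hu (by omega) (by omega)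
  by_contra hcon
  push_neg at hcon
  obtain ⟨hp0, hp1, hp3, hp5⟩ := hcon
  rcases Nat.even_or_odd p with ⟨kp, hkp⟩ | ⟨kp, hkp⟩
  · -- p even
    rcases Nat.even_or_odd (p / 2) with ⟨k2, hk2⟩ | ⟨k2, hk2⟩
    · -- p ≡ 0 mod 4 : reduce to g 1 with period p/2
      have hg1pf : IsPaperfolding (g 1) :=
        ⟨fun k => g (k + 1), fun k => a (k + 1), rfl, fun k => hgk (k + 1)⟩
      have hsq : ∃ i', ∀ m' < p / 2, g 1 (i' + m') = g 1 (i' + m' + p / 2) := by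
        refine ⟨i / 2, fun m' hm' => ?_⟩
        rcases Nat.even_or_odd i with ⟨ki, hki⟩ | ⟨ki, hki⟩
        · have e1 : 2 * (i / 2 + m') + 1 = i + (2 * m' + 1) := by omega
          have e2 : 2 * (i / 2 + m' + p / 2) + 1 = i + (2 * m' + 1) + p := by omega
          rw [← hodd, ← hodd, e1, e2]
          exact h (2 * m' + 1) (by omega)
        · have e1 : 2 * (i / 2 + m') + 1 = i + 2 * m' := by omega
          have e2 : 2 * (i / 2 + m' + p / 2) + 1 = i + 2 * m' + p := by omega
          rw [← hodd, ← hodd, e1, e2]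
          exact h (2 * m') (by omega)
      have := IH (p / 2) (by omega) (g 1) hg1pf hsq
      omega
    · -- p ≡ 2 mod 4 : direct contradiction at an even position
      exact evenNe' (i + i % 2) (i + i % 2 + p) (by omega) (by omega) (by omega)
        (h (i % 2) (by omega))
  · -- p odd, hence p ≥ 7
    have ha1 : ∀ n, g 1 (4 * n) = a 1 := (hgk 1).1
    have ha12 : ∀ n, g 1 (4 * n + 2) = !a 1 := (hgk 1).2.1
    rcases Nat.even_or_odd i with ⟨ki, hki⟩ | ⟨ki, hki⟩
    · -- i even: positions i+2t even, their partners odd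
      set m0 := (i + p - 1) / 2 with hm0
      have key : ∀ t ≤ 3, g 1 (m0 + t) = f (i + 2 * t) := by
        intro t ht
        have e1 : 2 * (m0 + t) + 1 = i + 2 * t + p := by omega
        rw [← hodd, e1]
        exact (h (2 * t) (by omega)).symm
      refine pf_alt4 (g 1) (a 1) ha1 ha12 m0 ?_ ?_ ?_
      · have k0 := key 0 (by omega)
        simp only [Nat.add_zero, Nat.mul_zero] at k0
        rw [k0, key 1 (by omega)]
        simpa using evenNe i (by omega)
      · rw [key 1 (by omega), show m0 + 1 + 1 = m0 + 2 by ring, key 2 (by omega)]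
        simpa [show i + 2 * 1 + 2 = i + 2 * 2 by ring] using evenNe (i + 2 * 1) (by omega)
      · rw [show m0 + 2 + 1 = m0 + 3 by ring, key 2 (by omega), key 3 (by omega)]
        simpa [show i + 2 * 2 + 2 = i + 2 * 3 by ring] using evenNe (i + 2 * 2) (by omega)
    · -- i odd: positions i+2t odd, their partners even
      set m0 := (i - 1) / 2 with hm0
      have key : ∀ t ≤ 3, g 1 (m0 + t) = f (i + 2 * t + p) := by
        intro t ht
        have e1 : 2 * (m0 + t) + 1 = i + 2 * t := by omega
        rw [← hodd, e1]
        exact h (2 * t) (by omega)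
      refine pf_alt4 (g 1) (a 1) ha1 ha12 m0 ?_ ?_ ?_
      · have k0 := key 0 (by omega)
        simp only [Nat.add_zero, Nat.mul_zero] at k0
        rw [k0, key 1 (by omega)]
        simpa [show i + p + 2 = i + 2 * 1 + p by ring] using
          evenNe (i + p) (by omega)
      · rw [key 1 (by omega), show m0 + 1 + 1 = m0 + 2 by ring, key 2 (by omega)]
        simpa [show i + 2 * 1 + p + 2 = i + 2 * 2 + p by ring] using
          evenNe (i + 2 * 1 + p) (by omega)
      · rw [show m0 + 2 + 1 = m0 + 3 by ring, key 2 (by omega), key 3 (by omega)]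
        simpa [show i + 2 * 2 + p + 2 = i + 2 * 3 + p by ring] using
          evenNe (i + 2 * 2 + p) (by omega)

/-- If `xx` is a nonempty square subword of a paperfolding word, then
`|x| ∈ {1,3,5}`. -/
theorem paperfolding_square_lengths
    (f : ℕ → Bool) (hf : IsPaperfolding f)
    (x : List Bool) (hx : x ≠ []) (hsub : IsSubword f (x ++ x)) :
    x.length = 1 ∨ x.length = 3 ∨ x.length = 5 := by
  obtain ⟨i, heq⟩ := hsub
  set p := x.length with hp
  have hplen : (x ++ x).length = 2 * p := by simp [hp, two_mul]
  have hget : ∀ j (hj : j < (x ++ x).length), (x ++ x)[j] = f (i + j) := by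
    intro j hj
    rw [List.getElem_of_eq heq hj]
    simp
  have hper : ∀ m < p, f (i + m) = f (i + m + p) := by
    intro m hm
    have h1 := hget m (by omega)
    have h2 := hget (m + p) (by omega)
    have e1 : (x ++ x)[m]'(by omega) = x[m]'(by omega) :=
      List.getElem_append_left (by omega)
    have e2 : (x ++ x)[m + p]'(by omega) = x[m]'(by omega) := by
      rw [List.getElem_append_right (by omega)]
      congr 1; omega
    rw [e1] at h1
    rw [e2] at h2
    have h3 := h1.symm.trans h2
    rwa [← Nat.add_assoc] at h3
  have hmain := pf_period p f hf ⟨i, hper⟩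
  have hpz : p ≠ 0 := by simp [hp, List.length_eq_zero_iff] ; exact hx
  omega
end

section
/- No paperfolding word contains a 3^+-power, i.e., no paperfolding word contains a subword which is a q-power for any rational q > 3. Moreover, the only cubes appearing as subwords of a paperfolding word are 000 and 111, and no fourth power appears. -/
lemma pf_spec (f : ℕ → Bool) (hf : IsPaperfolding f) :
    ∃ a : Bool, (∀ n, f (4 * n) = a) ∧ (∀ n, f (4 * n + 2) = !a) ∧
      IsPaperfolding (fun n => f (2 * n + 1)) := by
  obtain ⟨g, a, h0, hk⟩ := hf
  refine ⟨a 0, fun n => by rw [← h0]; exact (hk 0).1 n,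
    fun n => by rw [← h0]; exact (hk 0).2.1 n,
    ⟨fun k => g (k + 1), fun k => a (k + 1), ?_,
      fun k => ⟨(hk (k + 1)).1, (hk (k + 1)).2.1, fun n => (hk (k + 1)).2.2 n⟩⟩⟩
  funext n
  show g (0 + 1) n = f (2 * n + 1)
  rw [(hk 0).2.2 n, h0]

lemma pf_val (f : ℕ → Bool) (a : Bool) (h0 : ∀ n, f (4 * n) = a)
    (h2 : ∀ n, f (4 * n + 2) = !a) (m : ℕ) :
    f (2 * m) = if m % 2 = 0 then a else !a := by
  rcases Nat.even_or_odd m with ⟨n, hn⟩ | ⟨n, hn⟩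
  · have h4 : 2 * m = 4 * n := by omega
    have hm : m % 2 = 0 := by omega
    rw [h4, h0, if_pos hm]
  · have h4 : 2 * m = 4 * n + 2 := by omega
    have hm : ¬ m % 2 = 0 := by omega
    rw [h4, h2, if_neg hm]

lemma pf_even_step (f : ℕ → Bool) (hf : IsPaperfolding f) (m : ℕ) :
    f (2 * m) ≠ f (2 * m + 2) := by
  obtain ⟨a, h0, h2, _⟩ := pf_spec f hf
  have e1 := pf_val f a h0 h2 m
  have e2 := pf_val f a h0 h2 (m + 1)
  have h22 : 2 * (m + 1) = 2 * m + 2 := by ring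
  rw [h22] at e2
  intro hEq
  rw [e1, e2] at hEq
  rcases em (m % 2 = 0) with h | h
  · have h' : ¬ (m + 1) % 2 = 0 := by omega
    rw [if_pos h, if_neg h'] at hEq
    simp at hEq
  · have h' : (m + 1) % 2 = 0 := by omega
    rw [if_neg h, if_pos h'] at hEq
    simp at hEq

lemma no_period_one (f : ℕ → Bool) (hf : IsPaperfolding f) (i : ℕ) :
    ¬ ∀ j < 3, f (i + j) = f (i + j + 1) := by
  intro h
  have e1 := h (2 * ((i + 1) / 2) - i) (by omega)
  have e2 := h (2 * ((i + 1) / 2) - i + 1) (by omega)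
  have r1 : i + (2 * ((i + 1) / 2) - i) = 2 * ((i + 1) / 2) := by omega
  have r2 : i + (2 * ((i + 1) / 2) - i + 1) = 2 * ((i + 1) / 2) + 1 := by omega
  have r3 : 2 * ((i + 1) / 2) + 1 + 1 = 2 * ((i + 1) / 2) + 2 := by omega
  rw [r1] at e1
  rw [r2, r3] at e2
  exact pf_even_step f hf ((i + 1) / 2) (e1.trans e2)

lemma pf_no_period : ∀ p, 2 ≤ p → ∀ f : ℕ → Bool, IsPaperfolding f →
    ∀ i, ¬ ∀ j < 2 * p, f (i + j) = f (i + j + p) := by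
  intro p
  induction p using Nat.strong_induction_on with
  | _ p IH =>
    intro hp f hf i hyp
    obtain ⟨a, h0, h2, htail⟩ := pf_spec f hf
    rcases Nat.even_or_odd p with ⟨r, hr⟩ | hpo
    · -- p even, p = r + r
      by_cases hr1 : r = 1
      · -- p = 2
        have e := hyp (2 * ((i + 1) / 2) - i) (by omega)
        have r1 : i + (2 * ((i + 1) / 2) - i) = 2 * ((i + 1) / 2) := by omega
        have r2 : 2 * ((i + 1) / 2) + p = 2 * ((i + 1) / 2) + 2 := by omega
        rw [r1, r2] at e
        exact pf_even_step f hf ((i + 1) / 2) e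
      · -- r ≥ 2
        refine IH r (by omega) (by omega) _ htail (i / 2) ?_
        intro j hj
        have hx := hyp (2 * (i / 2) + 1 + 2 * j - i) (by omega)
        have e1 : i + (2 * (i / 2) + 1 + 2 * j - i) = 2 * (i / 2 + j) + 1 := by omega
        have e2 : 2 * (i / 2 + j) + 1 + p = 2 * (i / 2 + j + r) + 1 := by omega
        rw [e1, e2] at hx
        exact hx
    · -- p odd
      have h3 : 3 ≤ p := by
        rcases hpo with ⟨n, hn⟩; omega
    -- pick even position
      have hodd : p % 2 = 1 := by rcases hpo with ⟨n, hn⟩; omega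
      have e1 := hyp (2 * ((i + 1) / 2) - i) (by omega)
      have e2 := hyp (2 * ((i + 1) / 2) - i + p) (by omega)
      have r1 : i + (2 * ((i + 1) / 2) - i) = 2 * ((i + 1) / 2) := by omega
      have r2 : i + (2 * ((i + 1) / 2) - i + p) = 2 * ((i + 1) / 2) + p := by omega
      have r3 : 2 * ((i + 1) / 2) + p + p = 2 * ((i + 1) / 2 + p) := by omega
      rw [r1] at e1
      rw [r2, r3] at e2
      have key : f (2 * ((i + 1) / 2)) = f (2 * ((i + 1) / 2 + p)) := e1.trans e2
      have v1 := pf_val f a h0 h2 ((i + 1) / 2)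
      have v2 := pf_val f a h0 h2 ((i + 1) / 2 + p)
      rw [v1, v2] at key
      rcases em ((i + 1) / 2 % 2 = 0) with h | h
      · have h' : ¬ ((i + 1) / 2 + p) % 2 = 0 := by omega
        rw [if_pos h, if_neg h'] at key
        simp at key
      · have h' : ((i + 1) / 2 + p) % 2 = 0 := by omega
        rw [if_neg h, if_pos h'] at key
        simp at key

lemma prefix_pow (x x' : List Bool) (h : x' <+: x) :
    ∀ k, (List.replicate k x).flatten ++ x' <+:
      x ++ ((List.replicate k x).flatten ++ x')
  | 0 => by simpa using h.trans (List.prefix_append x x')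
  | k + 1 => by
      obtain ⟨t, ht⟩ := prefix_pow x x' h k
      refine ⟨t, ?_⟩
      simp only [List.replicate_succ, List.flatten_cons, List.append_assoc] at ht ⊢
      rw [ht]

lemma period_of_subword (f : ℕ → Bool) (x w : List Bool) (i : ℕ)
    (hpre : w <+: x ++ w)
    (hw : w = (List.range w.length).map fun m => f (i + m)) :
    ∀ j, j + x.length < w.length → f (i + j) = f (i + j + x.length) := by
  intro j hj
  have hval : ∀ m, m < w.length → w[m]? = some (f (i + m)) := by
    intro m hm
    conv_lhs => rw [hw]
    simp [hm]
  obtain ⟨t, ht⟩ := hpre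
  have k1 : (x ++ w)[j + x.length]? = w[j]? := by
    rw [List.getElem?_append_right (by omega)]
    congr 1
    omega
  have k2 : (x ++ w)[j + x.length]? = w[j + x.length]? := by
    rw [← ht, List.getElem?_append_left (by omega)]
  have := k2.symm.trans k1
  rw [hval j (by omega), hval (j + x.length) hj] at this
  have h3 : i + (j + x.length) = i + j + x.length := by omega
  rw [h3] at this
  exact (Option.some.inj this).symm

/-- No paperfolding word contains a `q`-power for rational `q > 3`; the only
cubes occurring as subwords are `000` and `111`, and no fourth power occurs. -/
theorem paperfolding_no_three_plus_power
    (f : ℕ → Bool) (hf : IsPaperfolding f) :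
    (∀ (q : ℚ) (x x' : List Bool) (k : ℕ), 3 < q → x ≠ [] → x' <+: x →
      (((List.replicate k x).flatten ++ x').length : ℚ) = q * x.length →
      ¬ IsSubword f ((List.replicate k x).flatten ++ x')) ∧
    (∀ x : List Bool, x ≠ [] → IsSubword f (x ++ x ++ x) →
      x = [false] ∨ x = [true]) ∧
    (∀ x : List Bool, x ≠ [] → ¬ IsSubword f (x ++ x ++ x ++ x)) := by
  refine ⟨?_, ?_, ?_⟩
  · intro q x x' k hq hx hpre hlen hsub
    obtain ⟨i, hw⟩ := hsub
    have hp : 0 < x.length := List.length_pos_iff.mpr hx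
    have hpq : (0 : ℚ) < (x.length : ℚ) := by exact_mod_cast hp
    have hql : (3 * (x.length : ℚ)) <
        (((List.replicate k x).flatten ++ x').length : ℚ) := by
      rw [hlen]
      nlinarith
    have hlen3 : 3 * x.length < ((List.replicate k x).flatten ++ x').length := by
      exact_mod_cast hql
    have hper := period_of_subword f x _ i (prefix_pow x x' hpre k) hw
    by_cases h1 : x.length = 1
    · refine no_period_one f hf i (fun j hj => ?_)
      have := hper j (by omega)
      rwa [h1] at this
    · exact pf_no_period x.length (by omega) f hf i (fun j hj => hper j (by omega))
  · intro x hx hsub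
    obtain ⟨i, hw⟩ := hsub
    by_cases h1 : x.length = 1
    · obtain ⟨b, rfl⟩ := List.length_eq_one_iff.mp h1
      cases b
      · exact Or.inl rfl
      · exact Or.inr rfl
    · exfalso
      have hp : 0 < x.length := List.length_pos_iff.mpr hx
      have hpre : x ++ x ++ x <+: x ++ (x ++ x ++ x) :=
        ⟨x, by simp [List.append_assoc]⟩
      have hper := period_of_subword f x (x ++ x ++ x) i hpre hw
      exact pf_no_period x.length (by omega) f hf i
        (fun j hj => hper j (by simp only [List.length_append]; omega))
  · intro x hx hsub
    obtain ⟨i, hw⟩ := hsub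
    have hp : 0 < x.length := List.length_pos_iff.mpr hx
    have hpre : x ++ x ++ x ++ x <+: x ++ (x ++ x ++ x ++ x) :=
      ⟨x, by simp [List.append_assoc]⟩
    have hper := period_of_subword f x (x ++ x ++ x ++ x) i hpre hw
    by_cases h1 : x.length = 1
    · refine no_period_one f hf i (fun j hj => ?_)
      have := hper j (by simp only [List.length_append]; omega)
      rwa [h1] at this
    · exact pf_no_period x.length (by omega) f hf i
        (fun j hj => hper j (by simp only [List.length_append]; omega))
end

section
/- Let u and v be subwords of a paperfolding word f with |u| = |v| ≥ 7. If u occurs at an even position of f and v occurs at an odd position of f, then u ≠ v. -/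
/-- `x` occurs at position `i` in the infinite word `f`. -/
def OccursAt {α : Type*} (f : ℕ → α) (x : List α) (i : ℕ) : Prop :=
  x = (List.range x.length).map fun m => f (i + m)

/-- Subwords of length at least 7 of a paperfolding word occurring at positions
of different parity are distinct. -/
theorem paperfolding_parity_distinct
    (f : ℕ → Bool) (hf : IsPaperfolding f)
    (u v : List Bool) (hlen : u.length = v.length) (h7 : 7 ≤ u.length)
    (i j : ℕ) (hi : Even i) (hj : Odd j)
    (hu : OccursAt f u i) (hv : OccursAt f v j) :
    u ≠ v := by
  intro heq
  obtain ⟨g, a, hg0, hgk⟩ := hf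
  obtain ⟨h00, h02, h0r⟩ := hgk 0
  obtain ⟨h10, h12, _⟩ := hgk 1
  -- letters of u/v are letters of f
  have key : ∀ t, t < 7 → f (i + t) = f (j + t) := by
    intro t ht
    have htu : t < u.length := by omega
    have htv : t < v.length := by omega
    have h1 : u[t]? = some (f (i + t)) := by
      conv_lhs => rw [hu]
      simp [htu]
    have h2 : v[t]? = some (f (j + t)) := by
      conv_lhs => rw [hv]
      simp [htv]
    rw [heq, h2] at h1
    exact (Option.some.inj h1).symm
  -- even positions of f alternate with period 4
  have feq : ∀ m, f (2 * m) = f (2 * m + 4) := by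
    intro m
    have h00' : ∀ n, f (4 * n) = a 0 := by intro n; rw [← hg0]; exact h00 n
    have h02' : ∀ n, f (4 * n + 2) = !(a 0) := by intro n; rw [← hg0]; exact h02 n
    rcases Nat.even_or_odd m with ⟨n, hn⟩ | ⟨n, hn⟩
    · have e1 : 2 * m = 4 * n := by omega
      have e2 : 2 * m + 4 = 4 * (n + 1) := by omega
      rw [e2, h00' (n + 1), e1, h00' n]
    · have e1 : 2 * m = 4 * n + 2 := by omega
      have e2 : 2 * m + 4 = 4 * (n + 1) + 2 := by omega
      rw [e2, h02' (n + 1), e1, h02' n]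
  -- even positions of g 1 strictly alternate with period 2
  have gne : ∀ m, g 1 (2 * m) ≠ g 1 (2 * m + 2) := by
    intro m
    rcases Nat.even_or_odd m with ⟨n, hn⟩ | ⟨n, hn⟩
    · have e1 : 2 * m = 4 * n := by omega
      have e2 : 2 * m + 2 = 4 * n + 2 := by omega
      rw [e2, h12 n, e1, h10 n]
      simp
    · have e1 : 2 * m = 4 * n + 2 := by omega
      have e2 : 2 * m + 2 = 4 * (n + 1) := by omega
      rw [e2, h10 (n + 1), e1, h12 n]
      simp
  obtain ⟨p, hp⟩ := hi
  obtain ⟨q, hq⟩ := hj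
  -- f at odd positions is g 1
  have fodd : ∀ t, f (j + 2 * t) = g 1 (q + t) := by
    intro t
    rw [h0r (q + t), hg0]
    congr 1
    omega
  rcases Nat.even_or_odd q with ⟨m, hm⟩ | ⟨m, hm⟩
  · -- q even: f j ≠ f (j + 4), but f i = f (i + 4)
    have hne : f (j + 2 * 0) ≠ f (j + 2 * 2) := by
      rw [fodd 0, fodd 2]
      have e1 : q + 0 = 2 * m := by omega
      have e2 : q + 2 = 2 * m + 2 := by omega
      rw [e1, e2]
      exact gne m
    have h1 : f (i + 0) = f (j + 0) := key 0 (by omega)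
    have h4 : f (i + 4) = f (j + 4) := key 4 (by omega)
    have he : f (i + 0) = f (i + 4) := by
      have e1 : i + 0 = 2 * p := by omega
      have e2 : i + 4 = 2 * p + 4 := by omega
      rw [e1, e2]; exact feq p
    apply hne
    have e1 : j + 2 * 0 = j + 0 := by omega
    have e2 : j + 2 * 2 = j + 4 := by omega
    rw [e1, e2, ← h1, ← h4, he]
  · -- q odd: f (j+2) ≠ f (j+6), but f (i+2) = f (i+6)
    have hne : f (j + 2 * 1) ≠ f (j + 2 * 3) := by
      rw [fodd 1, fodd 3]
      have e1 : q + 1 = 2 * (m + 1) := by omega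
      have e2 : q + 3 = 2 * (m + 1) + 2 := by omega
      rw [e1, e2]
      exact gne (m + 1)
    have h2 : f (i + 2) = f (j + 2) := key 2 (by omega)
    have h6 : f (i + 6) = f (j + 6) := key 6 (by omega)
    have he : f (i + 2) = f (i + 6) := by
      have e1 : i + 2 = 2 * (p + 1) := by omega
      have e2 : i + 6 = 2 * (p + 1) + 4 := by omega
      rw [e1, e2]; exact feq (p + 1)
    apply hne
    have e1 : j + 2 * 1 = j + 2 := by omega
    have e2 : j + 2 * 3 = j + 6 := by omega
    rw [e1, e2, ← h2, ← h6, he]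
end

section
/- Every finite arithmetic subsequence of odd difference of a paperfolding word is a subword of some (possibly different) paperfolding word. -/
/-- parity as a Bool -/
def pfPar (n : ℕ) : Bool := decide (n % 2 = 1)

lemma pfPar_add (x y : ℕ) : pfPar (x + y) = xor (pfPar x) (pfPar y) := by
  unfold pfPar
  rcases Nat.mod_two_eq_zero_or_one x with hx | hx <;>
    rcases Nat.mod_two_eq_zero_or_one y with hy | hy <;>
      simp [Nat.add_mod, hx, hy]

lemma pfPar_mul_odd {j : ℕ} (hj : Odd j) (t : ℕ) : pfPar (t * j) = pfPar t := by
  obtain ⟨c, hc⟩ := hj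
  subst hc
  unfold pfPar
  rw [Nat.mul_mod]
  have h1 : (2 * c + 1) % 2 = 1 := by omega
  rw [h1, mul_one, Nat.mod_mod_of_dvd _ (dvd_refl 2)]

/-- prepend a fold instruction to a paperfolding word -/
lemma pf_xor_helper (b x y z : Bool) :
    xor b (xor x z) = xor (xor (xor b x) y) (xor y z) := by
  cases b <;> cases x <;> cases y <;> cases z <;> rfl

def consPF (b : Bool) (h : ℕ → Bool) : ℕ → Bool :=
  fun n => if n % 2 = 1 then h (n / 2) else xor b (pfPar (n / 2))

lemma consPF_even (b : Bool) (h : ℕ → Bool) (m : ℕ) :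
    consPF b h (2 * m) = xor b (pfPar m) := by
  have h1 : (2 * m) % 2 = 0 := by omega
  have h2 : (2 * m) / 2 = m := by omega
  simp [consPF, h1, h2]

lemma consPF_odd (b : Bool) (h : ℕ → Bool) (n : ℕ) :
    consPF b h (2 * n + 1) = h n := by
  have h1 : (2 * n + 1) % 2 = 1 := by omega
  have h2 : (2 * n + 1) / 2 = n := by omega
  simp [consPF, h1, h2]

lemma pf_cons (b : Bool) {h : ℕ → Bool} (hh : IsPaperfolding h) :
    IsPaperfolding (consPF b h) := by
  obtain ⟨G, a, hG0, hprop⟩ := hh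
  refine ⟨fun k => match k with | 0 => consPF b h | k + 1 => G k,
          fun k => match k with | 0 => b | k + 1 => a k, rfl, ?_⟩
  intro k
  match k with
  | 0 =>
    refine ⟨fun n => ?_, fun n => ?_, fun n => ?_⟩
    · show consPF b h (4 * n) = b
      have : 4 * n = 2 * (2 * n) := by ring
      rw [this, consPF_even]
      have : pfPar (2 * n) = false := by unfold pfPar; simp [Nat.mul_mod_right]
      simp [this]
    · show consPF b h (4 * n + 2) = !b
      have : 4 * n + 2 = 2 * (2 * n + 1) := by ring
      rw [this, consPF_even]
      have : pfPar (2 * n + 1) = true := by unfold pfPar; simp [Nat.mul_add_mod]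
      cases b <;> simp [this]
    · show G 0 n = consPF b h (2 * n + 1)
      rw [consPF_odd, hG0]
  | k + 1 =>
    exact hprop k

lemma pf_decomp {f : ℕ → Bool} (hf : IsPaperfolding f) :
    ∃ (b : Bool) (f1 : ℕ → Bool), IsPaperfolding f1 ∧
      (∀ m, f (2 * m) = xor b (pfPar m)) ∧ (∀ n, f (2 * n + 1) = f1 n) := by
  obtain ⟨G, a, hG0, hprop⟩ := hf
  refine ⟨a 0, G 1, ⟨fun k => G (k + 1), fun k => a (k + 1), rfl,
    fun k => hprop (k + 1)⟩, fun m => ?_, fun n => ?_⟩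
  · rcases Nat.even_or_odd m with ⟨c, hc⟩ | ⟨c, hc⟩
    · have hm : 2 * m = 4 * c := by omega
      have hp : pfPar m = false := by unfold pfPar; simp; omega
      rw [hm, ← hG0, (hprop 0).1 c, hp]
      simp
    · have hm : 2 * m = 4 * c + 2 := by omega
      have hp : pfPar m = true := by unfold pfPar; simp; omega
      rw [hm, ← hG0, (hprop 0).2.1 c, hp]
      cases a 0 <;> simp
  · rw [← hG0, ← (hprop 0).2.2 n]

lemma pf_main (j : ℕ) (hj : Odd j) :
    ∀ k, ∀ f : ℕ → Bool, IsPaperfolding f → ∀ i : ℕ,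
      ∃ (g : ℕ → Bool) (i' : ℕ), IsPaperfolding g ∧
        ∀ s, s ≤ k → f (i + s * j) = g (i' + s) := by
  intro k
  induction k using Nat.strong_induction_on with
  | _ k IH =>
  intro f hf i
  obtain ⟨b, f1, hf1, heven, hodd⟩ := pf_decomp hf
  obtain ⟨j2, hj2⟩ : ∃ j2, j = 2 * j2 + 1 := by
    obtain ⟨c, hc⟩ := hj; exact ⟨c, by omega⟩
  by_cases hk : k = 0
  · subst hk
    refine ⟨f, if f i = b then 0 else 2, hf, ?_⟩
    intro s hs
    have hs0 : s = 0 := by omega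
    subst hs0
    have h0 : f 0 = b := by have := heven 0; simpa [pfPar] using this
    have h2 : f 2 = !b := by
      have := heven 1
      have hp : pfPar 1 = true := by unfold pfPar; simp
      rw [hp] at this
      cases b <;> simpa using this
    by_cases hfi : f i = b
    · simp [hfi, h0]
    · have : f i = !b := by cases b <;> cases hb : f i <;> simp_all
      simp [hfi, h2, this]
  · rcases Nat.even_or_odd i with ⟨i2, hi⟩ | ⟨i2, hi⟩
    · -- i = 2 * i2
      have hi' : i = 2 * i2 := by omega
      obtain ⟨h, i'', hh, hsub⟩ := IH ((k - 1) / 2) (by omega) f1 hf1 (i2 + j2)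
      refine ⟨consPF (xor (xor b (pfPar i2)) (pfPar i'')) h, 2 * i'',
        pf_cons _ hh, ?_⟩
      intro s hs
      rcases Nat.even_or_odd s with ⟨t, ht⟩ | ⟨t, ht⟩
      · -- s = 2t
        have hL : i + s * j = 2 * (i2 + t * j) := by
          subst hi'; have : s = 2 * t := by omega
          subst this; ring
        have hR : 2 * i'' + s = 2 * (i'' + t) := by omega
        rw [hL, heven, hR, consPF_even]
        have e1 : pfPar (i2 + t * j) = xor (pfPar i2) (pfPar t) := by
          rw [pfPar_add, pfPar_mul_odd hj]
        have e2 : pfPar (i'' + t) = xor (pfPar i'') (pfPar t) := pfPar_add _ _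
        rw [e1, e2]
        exact pf_xor_helper _ _ _ _
      · -- s = 2t + 1
        have ht' : t ≤ (k - 1) / 2 := by omega
        have hL : i + s * j = 2 * ((i2 + j2) + t * j) + 1 := by
          subst hi' ht hj2; ring
        have hR : 2 * i'' + s = 2 * (i'' + t) + 1 := by omega
        rw [hL, hodd, hsub t ht', hR, consPF_odd]
    · -- i = 2 * i2 + 1
      have hi' : i = 2 * i2 + 1 := by omega
      obtain ⟨h, i'', hh, hsub⟩ := IH (k / 2)
        (Nat.div_lt_self (by omega) one_lt_two) f1 hf1 i2
      refine ⟨consPF (xor (xor b (pfPar (i2 + j2 + 1))) (pfPar (i'' + 1))) h,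
        2 * i'' + 1, pf_cons _ hh, ?_⟩
      intro s hs
      rcases Nat.even_or_odd s with ⟨t, ht⟩ | ⟨t, ht⟩
      · -- s = 2t
        have ht' : t ≤ k / 2 := by omega
        have hL : i + s * j = 2 * (i2 + t * j) + 1 := by
          subst hi'; have : s = 2 * t := by omega
          subst this; ring
        have hR : 2 * i'' + 1 + s = 2 * (i'' + t) + 1 := by omega
        rw [hL, hodd, hsub t ht', hR, consPF_odd]
      · -- s = 2t + 1
        have hL : i + s * j = 2 * ((i2 + j2 + 1) + t * j) := by
          subst hi' ht hj2; ring
        have hR : 2 * i'' + 1 + s = 2 * ((i'' + 1) + t) := by omega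
        rw [hL, heven, hR, consPF_even]
        have e1 : pfPar (i2 + j2 + 1 + t * j)
            = xor (pfPar (i2 + j2 + 1)) (pfPar t) := by
          rw [pfPar_add, pfPar_mul_odd hj]
        have e2 : pfPar (i'' + 1 + t) = xor (pfPar (i'' + 1)) (pfPar t) :=
          pfPar_add _ _
        rw [e1, e2]
        exact pf_xor_helper _ _ _ _

/-- Every finite arithmetic subsequence of odd difference of a paperfolding
word is a subword of some paperfolding word. -/
theorem paperfolding_arith_subsequence_is_subword
    (f : ℕ → Bool) (hf : IsPaperfolding f)
    (i j k : ℕ) (hj : Odd j) :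
    ∃ g : ℕ → Bool, IsPaperfolding g ∧
      IsSubword g ((List.range (k + 1)).map fun s => f (i + s * j)) := by
  obtain ⟨g, i', hg, hsub⟩ := pf_main j hj k f hf i
  refine ⟨g, hg, i', ?_⟩
  rw [List.length_map, List.length_range]
  apply List.map_congr_left
  intro s hs
  rw [List.mem_range] at hs
  exact hsub s (by omega)
end

section
/- Every paperfolding word contains no 3^+-powers in arithmetic progressions of odd difference: for every i ≥ 0 and every odd j ≥ 1, the infinite word (f_{i+nj})_{n≥0} contains no q-power as a subword for any rational q > 3. -/
/-- Elements of a power `x^k x'` are determined by the index mod `|x|`. -/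
lemma pow_getElem {α : Type*} (x x' : List α) (hpre : x' <+: x) (hx : 0 < x.length) :
    ∀ (k : ℕ) (m : ℕ) (h : m < ((List.replicate k x).flatten ++ x').length),
      ((List.replicate k x).flatten ++ x')[m] = x[m % x.length]'(Nat.mod_lt _ hx) := by
  intro k
  induction k with
  | zero =>
      intro m h
      simp only [List.replicate, List.flatten_nil, List.nil_append] at h ⊢
      have hle := hpre.length_le
      rw [hpre.getElem h]
      congr 1
      exact (Nat.mod_eq_of_lt (lt_of_lt_of_le h hle)).symm
  | succ k ih =>
      intro m h
      have heq : (List.replicate (k + 1) x).flatten ++ x'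
          = x ++ ((List.replicate k x).flatten ++ x') := by
        rw [List.replicate_succ, List.flatten_cons, List.append_assoc]
      rw [List.getElem_of_eq heq h]
      by_cases hm : m < x.length
      · rw [List.getElem_append_left hm]
        congr 1
        exact (Nat.mod_eq_of_lt hm).symm
      · push_neg at hm
        have h2 : m - x.length < ((List.replicate k x).flatten ++ x').length := by
          have h3 : m < x.length + ((List.replicate k x).flatten ++ x').length := by
            have := heq ▸ h
            simpa [List.length_append] using this
          omega
        rw [List.getElem_append_right hm, ih (m - x.length) h2]
        congr 1
        rw [Nat.mod_eq_sub_mod hm]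

/-- Key lemma: a paperfolding word cannot have a period `p` along an
arithmetic progression of odd difference `j` over a window of length `≥ 2p`
(with a slightly longer window needed when `p = 1`). -/
lemma paperfolding_key (p : ℕ) : ∀ (f : ℕ → Bool), IsPaperfolding f →
    ∀ (s j N : ℕ), Odd j → 1 ≤ p → 2 * p ≤ N → (2 ≤ p ∨ 3 ≤ N) →
    (∀ n, n < N → f (s + n * j) = f (s + (n + p) * j)) → False := by
  induction p using Nat.strong_induction_on with
  | _ p IH =>
  intro f hf s j N hj hp hN hN3 hper
  obtain ⟨g, a, hg0, hg⟩ := hf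
  have hc : j % 2 = 1 := Nat.odd_iff.mp hj
  have h40 : ∀ n, f (4 * n) = a 0 := by intro n; rw [← hg0]; exact (hg 0).1 n
  have h42 : ∀ n, f (4 * n + 2) = !(a 0) := by intro n; rw [← hg0]; exact (hg 0).2.1 n
  have hodd : ∀ n, g 1 n = f (2 * n + 1) := by
    intro n; rw [← hg0]; exact (hg 0).2.2 n
  -- basic contradiction: an even position and a position 2 mod 4 further have distinct values
  have contra : ∀ m d : ℕ, m % 2 = 0 → d % 4 = 2 → f m = f (m + d) → False := by
    intro m d hm hd hEq
    have h4 : m % 4 = 0 ∨ m % 4 = 2 := by omega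
    rcases h4 with h | h
    · have e1 : f m = a 0 := by
        have := h40 (m / 4); rwa [show 4 * (m / 4) = m by omega] at this
      have e2 : f (m + d) = !(a 0) := by
        have := h42 ((m + d) / 4); rwa [show 4 * ((m + d) / 4) + 2 = m + d by omega] at this
      rw [e1, e2] at hEq; simp at hEq
    · have e1 : f m = !(a 0) := by
        have := h42 (m / 4); rwa [show 4 * (m / 4) + 2 = m by omega] at this
      have e2 : f (m + d) = a 0 := by
        have := h40 ((m + d) / 4); rwa [show 4 * ((m + d) / 4) = m + d by omega] at this
      rw [e1, e2] at hEq; simp at hEq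
  -- a helper to find an even position at the start of the progression
  have hfindeven : ∃ n0, n0 ≤ 1 ∧ (s + n0 * j) % 2 = 0 := by
    rcases Nat.even_or_odd s with hs | hs
    · refine ⟨0, by omega, ?_⟩
      obtain ⟨u, hu⟩ := hs; simp; omega
    · refine ⟨1, le_refl 1, ?_⟩
      obtain ⟨u, hu⟩ := hs; rw [one_mul]; omega
  have hcase : p % 2 = 1 ∨ p % 4 = 2 ∨ p % 4 = 0 := by omega
  rcases hcase with hpo | hp42 | hp40
  · -- p odd: use double of the period, which is 2 mod 4 times j
    obtain ⟨n0, hn0, hev⟩ := hfindeven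
    have hlt1 : n0 < N := by omega
    have hlt2 : n0 + p < N := by rcases hN3 with h | h <;> omega
    have e1 := hper n0 hlt1
    have e2 := hper (n0 + p) hlt2
    have echain := e1.trans e2
    have hrew : s + (n0 + p + p) * j = (s + n0 * j) + 2 * (p * j) := by
      have h' : (n0 + p + p) * j = n0 * j + 2 * (p * j) := by ring
      omega
    rw [hrew] at echain
    have hpj : Odd (p * j) := (Nat.odd_iff.mpr hpo).mul hj
    refine contra _ _ hev ?_ echain
    obtain ⟨u, hu⟩ := hpj; omega
  · -- p ≡ 2 (mod 4): direct contradiction at an even position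
    obtain ⟨n0, hn0, hev⟩ := hfindeven
    have e1 := hper n0 (by omega)
    have hrew : s + (n0 + p) * j = (s + n0 * j) + p * j := by
      have h' : (n0 + p) * j = n0 * j + p * j := by ring
      omega
    rw [hrew] at e1
    have hhalf : Odd ((p / 2) * j) := (Nat.odd_iff.mpr (by omega)).mul hj
    refine contra _ _ hev ?_ e1
    obtain ⟨u, hu⟩ := hhalf
    have h2 : p * j = 2 * ((p / 2) * j) := by
      set v := p / 2 with hv
      have hpv : p = 2 * v := by omega
      rw [hpv]; ring
    omega
  · -- p ≡ 0 (mod 4): recurse to the next paperfolding word with period p/2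
    obtain ⟨n1, hn1, hodd1⟩ : ∃ n1, n1 ≤ 1 ∧ (s + n1 * j) % 2 = 1 := by
      rcases Nat.even_or_odd s with hs | hs
      · refine ⟨1, le_refl 1, ?_⟩
        obtain ⟨u, hu⟩ := hs; rw [one_mul]; omega
      · refine ⟨0, by omega, ?_⟩
        obtain ⟨u, hu⟩ := hs; simp; omega
    have hp4 : 4 ≤ p := by omega
    set s1 := (s + n1 * j) / 2 with hs1def
    have hs1 : s + n1 * j = 2 * s1 + 1 := by omega
    have hrec : ∀ t, t < 2 * (p / 2) → g 1 (s1 + t * j) = g 1 (s1 + (t + p / 2) * j) := by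
      intro t ht
      have hlt : n1 + 2 * t < N := by omega
      have e := hper (n1 + 2 * t) hlt
      have l1 : s + (n1 + 2 * t) * j = 2 * (s1 + t * j) + 1 := by
        have h' : (n1 + 2 * t) * j = n1 * j + 2 * (t * j) := by ring
        omega
      have l2 : s + (n1 + 2 * t + p) * j = 2 * (s1 + (t + p / 2) * j) + 1 := by
        have h' : (n1 + 2 * t + p) * j = n1 * j + 2 * (t * j) + p * j := by ring
        have h'' : (t + p / 2) * j = t * j + (p / 2) * j := by ring
        have h3 : p * j = 2 * ((p / 2) * j) := by
          set v := p / 2 with hv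
          have hpv : p = 2 * v := by omega
          rw [hpv]; ring
        omega
      rw [hodd (s1 + t * j), hodd (s1 + (t + p / 2) * j), ← l1, ← l2]
      exact e
    have hpf1 : IsPaperfolding (g 1) :=
      ⟨fun k => g (k + 1), fun k => a (k + 1), rfl, fun k => hg (k + 1)⟩
    exact IH (p / 2) (by omega) (g 1) hpf1 s1 j (2 * (p / 2)) hj (by omega) (by omega)
      (Or.inl (by omega)) hrec

/-- Every paperfolding word contains no `3⁺`-powers in arithmetic progressions
of odd difference. -/
theorem paperfolding_no_three_plus_power_in_odd_AP
    (f : ℕ → Bool) (hf : IsPaperfolding f)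
    (i j : ℕ) (hj : Odd j) (hj1 : 1 ≤ j) :
    ∀ (q : ℚ) (x x' : List Bool) (k : ℕ), 3 < q → x ≠ [] → x' <+: x →
      (((List.replicate k x).flatten ++ x').length : ℚ) = q * x.length →
      ¬ IsSubword (fun n => f (i + n * j)) ((List.replicate k x).flatten ++ x') := by
  intro q x x' k hq hx hpre hlen hsub
  obtain ⟨i0, hw⟩ := hsub
  set w := (List.replicate k x).flatten ++ x' with hwdef
  set p := x.length with hpdef
  have hp : 0 < p := List.length_pos_iff.mpr hx
  have hL : 3 * p < w.length := by
    have h1 : (3 : ℚ) * (p : ℚ) < q * (p : ℚ) := by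
      apply mul_lt_mul_of_pos_right hq
      exact_mod_cast hp
    rw [← hlen] at h1
    exact_mod_cast h1
  have hget : ∀ m (h : m < w.length), w[m] = f (i + (i0 + m) * j) := by
    intro m h
    rw [List.getElem_of_eq hw h, List.getElem_map, List.getElem_range]
  have hper0 : ∀ n, n + p < w.length →
      f (i + (i0 + n) * j) = f (i + (i0 + (n + p)) * j) := by
    intro n hn
    have h1 : n < w.length := by omega
    rw [← hget n h1, ← hget (n + p) hn]
    rw [pow_getElem x x' hpre hp k n h1, pow_getElem x x' hpre hp k (n + p) hn]
    congr 1
    exact (Nat.add_mod_right n p).symm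
  have hper : ∀ n, n < w.length - p →
      f ((i + i0 * j) + n * j) = f ((i + i0 * j) + (n + p) * j) := by
    intro n hn
    have hn' : n + p < w.length := by omega
    have := hper0 n hn'
    have r1 : i + (i0 + n) * j = (i + i0 * j) + n * j := by
      have := add_mul i0 n j; omega
    have r2 : i + (i0 + (n + p)) * j = (i + i0 * j) + (n + p) * j := by
      have := add_mul i0 (n + p) j; omega
    rw [r1, r2] at this
    exact this
  exact paperfolding_key p f hf (i + i0 * j) j (w.length - p) hj hp (by omega)
    (Or.inr (by omega)) hper
end

section
/- Let f be any paperfolding word over the alphabet {1,4} and define v by v_{4n} = 2, v_{4n+2} = 3, v_{2n+1} = f_{2n+1} for all n ≥ 0. Then v contains no squares in arithmetic progressions of odd difference: for every i ≥ 0, odd j ≥ 1, and t ≥ 1, there exists 0 ≤ s < t with v_{i+sj} ≠ v_{i+(s+t)j}. -/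
/-- A paperfolding word over the alphabet `{1,4}`. -/
def IsPaperfolding14 (f : ℕ → ℕ) : Prop :=
  ∃ (g : ℕ → ℕ → ℕ) (a : ℕ → ℕ), g 0 = f ∧
    ∀ k, (a k = 1 ∨ a k = 4) ∧ (∀ n, g k (4 * n) = a k) ∧
      (∀ n, g k (4 * n + 2) = 5 - a k) ∧
      ∀ n, g (k + 1) n = g k (2 * n + 1)

/-- Recoding of the even positions of a word. -/
def pfRecode (h : ℕ → ℕ) (n : ℕ) : ℕ :=
  if n % 2 = 1 then h n else if n % 4 = 0 then 2 else 3

lemma pfRecode0 (h : ℕ → ℕ) (n : ℕ) : pfRecode h (4 * n) = 2 := by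
  have h1 : (4 * n) % 2 = 0 := by omega
  have h2 : (4 * n) % 4 = 0 := by omega
  simp [pfRecode, h1, h2]

lemma pfRecode2 (h : ℕ → ℕ) (n : ℕ) : pfRecode h (4 * n + 2) = 3 := by
  have h1 : (4 * n + 2) % 2 = 0 := by omega
  have h2 : (4 * n + 2) % 4 = 2 := by omega
  simp [pfRecode, h1, h2]

lemma pfRecode1 (h : ℕ → ℕ) (n : ℕ) : pfRecode h (2 * n + 1) = h (2 * n + 1) := by
  have h1 : (2 * n + 1) % 2 = 1 := by omega
  simp [pfRecode, h1]

lemma pf_values {g : ℕ → ℕ → ℕ} {a : ℕ → ℕ}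
    (H : ∀ k, (a k = 1 ∨ a k = 4) ∧ (∀ n, g k (4 * n) = a k) ∧
      (∀ n, g k (4 * n + 2) = 5 - a k) ∧ ∀ n, g (k + 1) n = g k (2 * n + 1)) :
    ∀ n k, g k n = 1 ∨ g k n = 4 := by
  intro n
  induction n using Nat.strong_induction_on with
  | _ n ih =>
    intro k
    obtain ⟨ha, h0, h2, hrec⟩ := H k
    rcases Nat.even_or_odd n with ⟨m, hm⟩ | ⟨m, hm⟩
    · rcases Nat.even_or_odd m with ⟨q, hq⟩ | ⟨q, hq⟩
      · have hn : n = 4 * q := by omega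
        rw [hn, h0]; exact ha
      · have hn : n = 4 * q + 2 := by omega
        rw [hn, h2]
        rcases ha with h | h <;> omega
    · have hn : n = 2 * m + 1 := by omega
      rw [hn, ← hrec m]
      exact ih m (by omega) (k + 1)

lemma pf_main_s12 :
    ∀ t : ℕ, ∀ f v : ℕ → ℕ, IsPaperfolding14 f →
    (∀ n, v (4 * n) = 2) → (∀ n, v (4 * n + 2) = 3) →
    (∀ n, v (2 * n + 1) = f (2 * n + 1)) →
    ∀ i j : ℕ, Odd j → 1 ≤ t → ∃ s < t, v (i + s * j) ≠ v (i + (s + t) * j) := by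
  intro t
  induction t using Nat.strong_induction_on with
  | _ t IH =>
    intro f v hf hv0 hv2 hv1 i j hj ht
    obtain ⟨g, a, hg0, H⟩ := hf
    obtain ⟨jm, hjm⟩ := hj
    -- helper facts about v
    have vE0 : ∀ x, x % 4 = 0 → v x = 2 := by
      intro x hx
      have h4 : 4 * (x / 4) = x := by omega
      rw [← h4]; exact hv0 _
    have vE2 : ∀ x, x % 4 = 2 → v x = 3 := by
      intro x hx
      have h4 : 4 * (x / 4) + 2 = x := by omega
      rw [← h4]; exact hv2 _
    have vO : ∀ x, x % 2 = 1 → (v x = 1 ∨ v x = 4) := by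
      intro x hx
      have h2 : 2 * (x / 2) + 1 = x := by omega
      rw [← h2, hv1]
      have := pf_values H (2 * (x / 2) + 1) 0
      rw [hg0] at this
      exact this
    rcases Nat.even_or_odd t with ⟨u, hu⟩ | hto
    · -- t even, t = u + u
      have hu1 : 1 ≤ u := by omega
      rcases Nat.even_or_odd u with ⟨w, hwu⟩ | huo
      · -- t ≡ 0 (mod 4): descend
        by_contra hc
        push_neg at hc
        -- the derived paperfolding word g 1
        have hh : IsPaperfolding14 (g 1) :=
          ⟨fun k => g (k + 1), fun k => a (k + 1), rfl, fun k => H (k + 1)⟩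
        -- choose s0 ≤ 1 with i + s0 * j odd
        have hs0 : ∃ s0, s0 ≤ 1 ∧ (i + s0 * j) % 2 = 1 := by
          rcases Nat.even_or_odd i with ⟨m, hm⟩ | ⟨m, hm⟩
          · exact ⟨1, le_refl 1, by rw [one_mul, hjm]; omega⟩
          · exact ⟨0, by omega, by rw [zero_mul]; omega⟩
        obtain ⟨s0, hs0le, hs0odd⟩ := hs0
        obtain ⟨m0, hm0e⟩ : Odd (i + s0 * j) := Nat.odd_iff.mpr hs0odd
        -- apply the induction hypothesis to g 1 and its recoding
        obtain ⟨k, hk, hne⟩ :=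
          IH u (by omega) (g 1) (pfRecode (g 1)) hh (pfRecode0 _) (pfRecode2 _)
            (pfRecode1 _) m0 j ⟨jm, hjm⟩ hu1
        apply hne
        set x := m0 + k * j with hx
        set y := m0 + (k + u) * j with hy
        -- key equality: g 1 x = g 1 y
        have e3 : i + (s0 + 2 * k) * j = 2 * x + 1 := by
          calc i + (s0 + 2 * k) * j = (i + s0 * j) + 2 * (k * j) := by ring
            _ = (2 * m0 + 1) + 2 * (k * j) := by rw [hm0e]
            _ = 2 * x + 1 := by rw [hx]; ring
        have e4 : i + (s0 + 2 * k + t) * j = 2 * y + 1 := by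
          calc i + (s0 + 2 * k + t) * j = (i + s0 * j) + 2 * ((k + u) * j) := by
                rw [hu]; ring
            _ = (2 * m0 + 1) + 2 * ((k + u) * j) := by rw [hm0e]
            _ = 2 * y + 1 := by rw [hy]; ring
        have hgx : g 1 x = f (2 * x + 1) := by rw [← hg0]; exact (H 0).2.2.2 x
        have hgy : g 1 y = f (2 * y + 1) := by rw [← hg0]; exact (H 0).2.2.2 y
        have hxy : g 1 x = g 1 y := by
          rw [hgx, hgy, ← hv1, ← hv1, ← e3, ← e4]
          exact hc (s0 + 2 * k) (by omega)
        -- y = x + 2 * (w * j)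
        have e5 : y = x + 2 * (w * j) := by
          rw [hx, hy, hwu]; ring
        rcases Nat.even_or_odd x with hxe | hxo
        · -- x even: compare residues mod 4
          obtain ⟨ha1, h01, h21, _⟩ := H 1
          have gE : ∀ z : ℕ, z % 2 = 0 →
              (z % 4 = 0 ∧ g 1 z = a 1) ∨ (z % 4 = 2 ∧ g 1 z = 5 - a 1) := by
            intro z hz
            rcases (by omega : z % 4 = 0 ∨ z % 4 = 2) with h | h
            · left
              have h4 : 4 * (z / 4) = z := by omega
              exact ⟨h, by rw [← h4]; exact h01 _⟩
            · right
              have h4 : 4 * (z / 4) + 2 = z := by omega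
              exact ⟨h, by rw [← h4]; exact h21 _⟩
          have hxe' : x % 2 = 0 := Nat.even_iff.mp hxe
          have hye' : y % 2 = 0 := by omega
          have hmod : x % 4 = y % 4 := by
            rcases gE x hxe' with ⟨hx4, hxv⟩ | ⟨hx4, hxv⟩ <;>
              rcases gE y hye' with ⟨hy4, hyv⟩ | ⟨hy4, hyv⟩ <;>
              rw [hxv, hyv] at hxy <;> omega
          have hx4 : x % 4 = 0 ∨ x % 4 = 2 := by omega
          rcases hx4 with h | h
          · have hxx : 4 * (x / 4) = x := by omega
            have hyy : 4 * (y / 4) = y := by omega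
            rw [← hxx, ← hyy, pfRecode0, pfRecode0]
          · have hxx : 4 * (x / 4) + 2 = x := by omega
            have hyy : 4 * (y / 4) + 2 = y := by omega
            rw [← hxx, ← hyy, pfRecode2, pfRecode2]
        · -- x odd: recode is identity
          have hxo' : x % 2 = 1 := Nat.odd_iff.mp hxo
          have hyo' : y % 2 = 1 := by omega
          have hxx : 2 * (x / 2) + 1 = x := by omega
          have hyy : 2 * (y / 2) + 1 = y := by omega
          rw [← hxx, ← hyy, pfRecode1, pfRecode1, hxx, hyy]
          exact hxy
      · -- t ≡ 2 (mod 4)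
        obtain ⟨w, hw⟩ : Odd (u * j) := huo.mul ⟨jm, hjm⟩
        have htj : t * j = 4 * w + 2 := by
          calc t * j = 2 * (u * j) := by rw [hu]; ring
            _ = 4 * w + 2 := by rw [hw]; ring
        rcases Nat.even_or_odd i with ⟨m, hm⟩ | ⟨m, hm⟩
        · refine ⟨0, by omega, ?_⟩
          have e1 : i + 0 * j = i := by ring
          have e2 : i + (0 + t) * j = i + (4 * w + 2) := by
            rw [zero_add, htj]
          rw [e1, e2]
          rcases (by omega : i % 4 = 0 ∨ i % 4 = 2) with h | h
          · rw [vE0 i h, vE2 (i + (4 * w + 2)) (by omega)]; omega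
          · rw [vE2 i h, vE0 (i + (4 * w + 2)) (by omega)]; omega
        · refine ⟨1, by omega, ?_⟩
          have e1 : i + 1 * j = i + (2 * jm + 1) := by rw [one_mul, hjm]
          have e2 : i + (1 + t) * j = i + (2 * jm + 1) + (4 * w + 2) := by
            calc i + (1 + t) * j = i + 1 * j + t * j := by ring
              _ = i + (2 * jm + 1) + (4 * w + 2) := by rw [e1, htj]
          rw [e1, e2]
          have hp : (i + (2 * jm + 1)) % 2 = 0 := by omega
          rcases (by omega : (i + (2 * jm + 1)) % 4 = 0 ∨ (i + (2 * jm + 1)) % 4 = 2)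
            with h | h
          · rw [vE0 _ h, vE2 (i + (2 * jm + 1) + (4 * w + 2)) (by omega)]; omega
          · rw [vE2 _ h, vE0 (i + (2 * jm + 1) + (4 * w + 2)) (by omega)]; omega
    · -- t odd: positions have opposite parity
      obtain ⟨w, hw⟩ : Odd (t * j) := hto.mul ⟨jm, hjm⟩
      refine ⟨0, by omega, ?_⟩
      have e1 : i + 0 * j = i := by ring
      have e2 : i + (0 + t) * j = i + (2 * w + 1) := by rw [zero_add, hw]
      rw [e1, e2]
      rcases Nat.even_or_odd i with ⟨m, hm⟩ | ⟨m, hm⟩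
      · have hvq := vO (i + (2 * w + 1)) (by omega)
        rcases (by omega : i % 4 = 0 ∨ i % 4 = 2) with h | h
        · rw [vE0 i h]; omega
        · rw [vE2 i h]; omega
      · have hvp := vO i (by omega)
        rcases (by omega : (i + (2 * w + 1)) % 4 = 0 ∨ (i + (2 * w + 1)) % 4 = 2)
          with h | h
        · rw [vE0 _ h]; omega
        · rw [vE2 _ h]; omega

/-- The word `v` obtained from a paperfolding word over `{1,4}` by recoding the
even positions contains no squares in arithmetic progressions of odd
difference. -/
theorem recoded_paperfolding_no_square_in_odd_AP
    (f v : ℕ → ℕ) (hf : IsPaperfolding14 f)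
    (hv0 : ∀ n, v (4 * n) = 2) (hv2 : ∀ n, v (4 * n + 2) = 3)
    (hv1 : ∀ n, v (2 * n + 1) = f (2 * n + 1)) :
    ∀ i j t, Odd j → 1 ≤ t → ∃ s < t, v (i + s * j) ≠ v (i + (s + t) * j) := by
  intro i j t hj ht
  exact pf_main_s12 t f v hf hv0 hv2 hv1 i j hj ht
end

section
/- Let v be the word over {1,2,3,4} obtained from a paperfolding word as described, and let f be the underlying paperfolding word. Then for every rational r < 2, v contains an r-power; i.e., v does not avoid r-powers for any real r < 2. -/
/-- Step lemma: a period-`2s` repetition at the odd-position subsequence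
lifts to a period-`4s` repetition. -/
lemma pf_step (u u' : ℕ → ℕ) (h0 : ∀ n, u (4 * n) = u 0)
    (h2 : ∀ n, u (4 * n + 2) = u 2) (ho : ∀ n, u (2 * n + 1) = u' n)
    (s i : ℕ) (h : ∀ j < 2 * s - 1, u' (i + j) = u' (i + j + 2 * s)) :
    ∀ j < 4 * s - 1, u (2 * i + j) = u (2 * i + j + 4 * s) := by
  intro j hj
  rcases Nat.even_or_odd j with ⟨j', rfl⟩ | ⟨j', rfl⟩
  · rcases Nat.even_or_odd (i + j') with ⟨q, hq⟩ | ⟨q, hq⟩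
    · rw [show 2 * i + (j' + j') = 4 * q by omega,
        show 4 * q + 4 * s = 4 * (q + s) by ring, h0, h0]
    · rw [show 2 * i + (j' + j') = 4 * q + 2 by omega,
        show 4 * q + 2 + 4 * s = 4 * (q + s) + 2 by omega, h2, h2]
  · rw [show 2 * i + (2 * j' + 1) = 2 * (i + j') + 1 by ring,
      show 2 * (i + j') + 1 + 4 * s = 2 * (i + j' + 2 * s) + 1 by ring, ho, ho]
    exact h j' (by omega)

/-- The word `v` obtained from a paperfolding word does not avoid `r`-powers
for any rational `r < 2`: it contains a `q`-power for some rational `q ≥ r`. -/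
theorem recoded_paperfolding_contains_r_powers
    (f v : ℕ → ℕ) (hf : IsPaperfolding14 f)
    (hv0 : ∀ n, v (4 * n) = 2) (hv2 : ∀ n, v (4 * n + 2) = 3)
    (hv1 : ∀ n, v (2 * n + 1) = f (2 * n + 1)) :
    ∀ r : ℚ, r < 2 → ∃ (q : ℚ) (x x' : List ℕ) (k : ℕ),
      r ≤ q ∧ x ≠ [] ∧ x' <+: x ∧
      (((List.replicate k x).flatten ++ x').length : ℚ) = q * x.length ∧
      IsSubword v ((List.replicate k x).flatten ++ x') := by
  obtain ⟨g, a, hg0, hgk⟩ := hf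
  -- base: every level has two equal adjacent-with-gap-2 values
  have hbase : ∀ m, ∃ i, ∀ j < 2 - 1, g m (i + j) = g m (i + j + 2) := by
    intro m
    have h40 : g (m + 1) 0 = a (m + 1) := by simpa using (hgk (m + 1)).2.1 0
    have h42 : g (m + 1) 2 = 5 - a (m + 1) := by simpa using (hgk (m + 1)).2.2.1 0
    have h41 : g (m + 1) 1 = a (m + 2) := by
      have e1 : g (m + 2) 0 = g (m + 1) 1 := by simpa using (hgk (m + 1)).2.2.2 0
      have e2 : g (m + 2) 0 = a (m + 2) := by simpa using (hgk (m + 2)).2.1 0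
      rw [← e1, e2]
    have o0 := (hgk m).2.2.2 0
    have o1 := (hgk m).2.2.2 1
    have o2 := (hgk m).2.2.2 2
    norm_num at o0 o1 o2
    have hm1 := (hgk (m + 1)).1
    have hm2 := (hgk (m + 2)).1
    by_cases hEq : a (m + 2) = a (m + 1)
    · refine ⟨1, ?_⟩
      intro j hj
      have : j = 0 := by omega
      subst this
      norm_num
      omega
    · refine ⟨3, ?_⟩
      intro j hj
      have : j = 0 := by omega
      subst this
      norm_num
      omega
  -- main induction: every level has a period 2^(k+1) repetition of length 2^(k+2)-1
  have main : ∀ k, ∀ m, ∃ i, ∀ j < 2 ^ (k + 1) - 1,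
      g m (i + j) = g m (i + j + 2 ^ (k + 1)) := by
    intro k
    induction k with
    | zero =>
      intro m
      obtain ⟨i, hi⟩ := hbase m
      exact ⟨i, by simpa using hi⟩
    | succ k ih =>
      intro m
      obtain ⟨i, hi⟩ := ih (m + 1)
      have c0 : g m 0 = a m := by simpa using (hgk m).2.1 0
      have c2 : g m 2 = 5 - a m := by simpa using (hgk m).2.2.1 0
      have h0 : ∀ n, g m (4 * n) = g m 0 := fun n => by rw [(hgk m).2.1 n, c0]
      have h2 : ∀ n, g m (4 * n + 2) = g m 2 := fun n => by rw [(hgk m).2.2.1 n, c2]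
      have ho : ∀ n, g m (2 * n + 1) = g (m + 1) n := fun n => ((hgk m).2.2.2 n).symm
      have hi' : ∀ j < 2 * 2 ^ k - 1, g (m + 1) (i + j) = g (m + 1) (i + j + 2 * 2 ^ k) := by
        have e : 2 ^ (k + 1) = 2 * 2 ^ k := by ring
        rw [← e]; exact hi
      have := pf_step (g m) (g (m + 1)) h0 h2 ho (2 ^ k) i hi'
      refine ⟨2 * i, ?_⟩
      have e : 2 ^ (k + 1 + 1) = 4 * 2 ^ k := by ring
      rw [e]; exact this
  -- lift to v
  have hrepv : ∀ k : ℕ, ∃ i, ∀ j < 4 * 2 ^ k - 1,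
      v (i + j) = v (i + j + 4 * 2 ^ k) := by
    intro k
    obtain ⟨i, hi⟩ := main k 1
    have h0v : ∀ n, v (4 * n) = v 0 := by
      intro n; rw [hv0 n]; symm; simpa using hv0 0
    have h2v : ∀ n, v (4 * n + 2) = v 2 := by
      intro n; rw [hv2 n]; symm; simpa using hv2 0
    have hov : ∀ n, v (2 * n + 1) = g 1 n := by
      intro n
      rw [hv1 n, ← hg0]
      exact ((hgk 0).2.2.2 n).symm
    have hi' : ∀ j < 2 * 2 ^ k - 1, g 1 (i + j) = g 1 (i + j + 2 * 2 ^ k) := by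
      have e : 2 ^ (k + 1) = 2 * 2 ^ k := by ring
      rw [← e]; exact hi
    exact ⟨2 * i, pf_step v (g 1) h0v h2v hov (2 ^ k) i hi'⟩
  -- final assembly
  intro r hr
  obtain ⟨n, hn⟩ : ∃ n : ℕ, ((1 : ℚ) / 2) ^ n < 2 - r :=
    exists_pow_lt_of_lt_one (by linarith) (by norm_num)
  obtain ⟨i, hi⟩ := hrepv n
  set p : ℕ := 4 * 2 ^ n with hp
  have hp0 : 0 < p := by positivity
  have hp1 : 1 ≤ p := hp0
  have hpQ : (0 : ℚ) < (p : ℚ) := by exact_mod_cast hp0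
  refine ⟨2 - 1 / (p : ℚ), (List.range p).map (fun m => v (i + m)),
    (List.range (p - 1)).map (fun m => v (i + m)), 1, ?_, ?_, ?_, ?_, ?_⟩
  · -- r ≤ q
    have h2n : ((2 : ℚ)) ^ n ≤ (p : ℚ) := by
      have : ((2 : ℚ)) ^ n ≤ 4 * 2 ^ n := by nlinarith [pow_pos (show (0:ℚ) < 2 by norm_num) n]
      calc ((2:ℚ))^n ≤ 4 * 2 ^ n := this
        _ = (p : ℚ) := by push_cast [hp]; ring
    have hpow : ((1 : ℚ) / 2) ^ n = 1 / 2 ^ n := by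
      rw [div_pow, one_pow]
    have h1p : (1 : ℚ) / p ≤ 1 / 2 ^ n :=
      one_div_le_one_div_of_le (by positivity) h2n
    rw [hpow] at hn
    linarith
  · simp [hp0.ne']
  · have hx' : (List.range (p - 1)).map (fun m => v (i + m)) =
        ((List.range p).map (fun m => v (i + m))).take (p - 1) := by
      rw [← List.map_take, List.take_range, Nat.min_eq_left (by omega)]
    rw [hx']
    exact List.take_prefix _ _
  · simp only [List.replicate_one, List.flatten_cons, List.flatten_nil, List.append_nil,
      List.length_append, List.length_map, List.length_range]
    have hcast : ((p + (p - 1) : ℕ) : ℚ) = 2 * (p : ℚ) - 1 := by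
      push_cast [Nat.cast_sub hp1]
      ring
    rw [hcast]
    field_simp
  · refine ⟨i, ?_⟩
    simp only [List.replicate_one, List.flatten_cons, List.flatten_nil, List.append_nil,
      List.length_append, List.length_map, List.length_range]
    rw [List.range_add, List.map_append, List.map_map]
    congr 1
    refine List.map_congr_left ?_
    intro m hm
    have hm' : m < p - 1 := List.mem_range.mp hm
    simp only [Function.comp]
    rw [show i + (p + m) = i + m + p from by omega]
    exact hi m hm'
end

section
/- There exist uncountably many infinite words over a 4-letter alphabet that contain no squares in any arithmetic progression of odd difference. -/
/-- Paperfolding sequence with folding instructions `e`. -/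
def pf : (ℕ → Bool) → ℕ → Bool
  | e, n =>
    if n % 2 = 0 then xor (e 0) (decide (n / 2 % 2 = 1))
    else pf (fun k => e (k + 1)) (n / 2)
termination_by e n => n
decreasing_by
  exact Nat.div_lt_self (by omega) (by omega)

lemma pf_even (e : ℕ → Bool) (m : ℕ) :
    pf e (2 * m) = xor (e 0) (decide (m % 2 = 1)) := by
  rw [pf]
  simp [Nat.mul_div_cancel_left, Nat.mul_mod_right]

lemma pf_odd (e : ℕ → Bool) (m : ℕ) :
    pf e (2 * m + 1) = pf (fun k => e (k + 1)) m := by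
  rw [pf]
  have h1 : (2 * m + 1) % 2 = 1 := by omega
  have h2 : (2 * m + 1) / 2 = m := by omega
  simp [h1, h2]

/-- Every paperfolding sequence has no squares in odd-difference APs of even length. -/
lemma pf_no_even_square : ∀ t : ℕ, ∀ (e : ℕ → Bool) (i j : ℕ), j % 2 = 1 →
    t % 2 = 0 → 2 ≤ t →
    ∃ s < t, pf e (i + s * j) ≠ pf e (i + (s + t) * j) := by
  intro t
  induction t using Nat.strong_induction_on with
  | _ t ih =>
    intro e i j hj ht2 ht
    obtain ⟨t₁, rfl⟩ : ∃ t₁, t = 2 * t₁ := ⟨t / 2, by omega⟩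
    rcases Nat.even_or_odd t₁ with he | ho
    · -- t ≡ 0 mod 4 : recurse on odd positions
      have ht₁2 : t₁ % 2 = 0 := by rcases he with ⟨c, hc⟩; omega
      have ht₁ : 2 ≤ t₁ := by omega
      set s₀ := (i + 1) % 2 with hs₀
      have hmul : (s₀ * j) % 2 = s₀ % 2 := by
        have := Nat.mul_mod s₀ j 2; rw [hj] at this; omega
      have hodd : (i + s₀ * j) % 2 = 1 := by omega
      obtain ⟨u, hu⟩ : ∃ u, i + s₀ * j = 2 * u + 1 := ⟨(i + s₀ * j) / 2, by omega⟩
      obtain ⟨r, hr, hne⟩ := ih t₁ (by omega) (fun k => e (k + 1)) u j hj ht₁2 ht₁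
      refine ⟨s₀ + 2 * r, by omega, ?_⟩
      have e1 : i + (s₀ + 2 * r) * j = 2 * (u + r * j) + 1 := by
        have : i + (s₀ + 2 * r) * j = (i + s₀ * j) + 2 * (r * j) := by ring
        rw [this, hu]; ring
      have e2 : i + (s₀ + 2 * r + 2 * t₁) * j = 2 * (u + (r + t₁) * j) + 1 := by
        have : i + (s₀ + 2 * r + 2 * t₁) * j = (i + s₀ * j) + 2 * ((r + t₁) * j) := by
          ring
        rw [this, hu]; ring
      rw [e1, e2, pf_odd, pf_odd]
      exact hne
    · -- t ≡ 2 mod 4 : even positions alternate with period 4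
      have ht₁o : t₁ % 2 = 1 := by rcases ho with ⟨c, hc⟩; omega
      set s := i % 2 with hs
      have hmul : (s * j) % 2 = s % 2 := by
        have := Nat.mul_mod s j 2; rw [hj] at this; omega
      have heven : (i + s * j) % 2 = 0 := by omega
      obtain ⟨m, hm⟩ : ∃ m, i + s * j = 2 * m := ⟨(i + s * j) / 2, by omega⟩
      refine ⟨s, by omega, ?_⟩
      have e2 : i + (s + 2 * t₁) * j = 2 * (m + t₁ * j) := by
        have : i + (s + 2 * t₁) * j = (i + s * j) + 2 * (t₁ * j) := by ring
        rw [this, hm]; ring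
      rw [hm, e2, pf_even, pf_even]
      have hk : (t₁ * j) % 2 = 1 := by
        rw [Nat.mul_mod, ht₁o, hj]
      have hmm : m % 2 ≠ (m + t₁ * j) % 2 := by omega
      cases e 0 <;> simp <;> omega

/-- The 4-letter word built from a paperfolding sequence. -/
def wv (e : ℕ → Bool) : ℕ → Fin 4 := fun n =>
  if n % 2 = 1 then (if pf e (n / 2) then 1 else 0)
  else if n % 4 = 0 then 2 else 3

lemma wv_odd (e : ℕ → Bool) (m : ℕ) :
    wv e (2 * m + 1) = if pf e m then 1 else 0 := by
  have h1 : (2 * m + 1) % 2 = 1 := by omega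
  have h2 : (2 * m + 1) / 2 = m := by omega
  simp [wv, h1, h2]

lemma wv_even (e : ℕ → Bool) (n : ℕ) (h : n % 2 = 0) :
    wv e n = if n % 4 = 0 then 2 else 3 := by
  have h1 : ¬ (n % 2 = 1) := by omega
  simp [wv, h1]

/-- The main combinatorial property of `wv`. -/
lemma wv_no_square (e : ℕ → Bool) (i j t : ℕ) (hj : j % 2 = 1) (ht : 1 ≤ t) :
    ∃ s < t, wv e (i + s * j) ≠ wv e (i + (s + t) * j) := by
  rcases Nat.even_or_odd t with he | ho
  · obtain ⟨t₁, rfl⟩ : ∃ t₁, t = 2 * t₁ := by rcases he with ⟨c, hc⟩; exact ⟨c, by omega⟩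
    rcases Nat.even_or_odd t₁ with he1 | ho1
    · -- t ≡ 0 mod 4 : reduce to paperfolding on odd positions
      have ht₁2 : t₁ % 2 = 0 := by rcases he1 with ⟨c, hc⟩; omega
      have ht₁ : 2 ≤ t₁ := by omega
      set s₀ := (i + 1) % 2 with hs₀
      have hmul : (s₀ * j) % 2 = s₀ % 2 := by
        have := Nat.mul_mod s₀ j 2; rw [hj] at this; omega
      have hodd : (i + s₀ * j) % 2 = 1 := by omega
      obtain ⟨u, hu⟩ : ∃ u, i + s₀ * j = 2 * u + 1 := ⟨(i + s₀ * j) / 2, by omega⟩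
      obtain ⟨r, hr, hne⟩ := pf_no_even_square t₁ e u j hj ht₁2 ht₁
      refine ⟨s₀ + 2 * r, by omega, ?_⟩
      have e1 : i + (s₀ + 2 * r) * j = 2 * (u + r * j) + 1 := by
        have : i + (s₀ + 2 * r) * j = (i + s₀ * j) + 2 * (r * j) := by ring
        rw [this, hu]; ring
      have e2 : i + (s₀ + 2 * r + 2 * t₁) * j = 2 * (u + (r + t₁) * j) + 1 := by
        have : i + (s₀ + 2 * r + 2 * t₁) * j = (i + s₀ * j) + 2 * ((r + t₁) * j) := by
          ring
        rw [this, hu]; ring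
      rw [e1, e2, wv_odd, wv_odd]
      cases h1 : pf e (u + r * j) <;> cases h2 : pf e (u + (r + t₁) * j) <;>
        simp_all
    · -- t ≡ 2 mod 4 : even positions
      have ht₁o : t₁ % 2 = 1 := by rcases ho1 with ⟨c, hc⟩; omega
      set s := i % 2 with hs
      have hmul : (s * j) % 2 = s % 2 := by
        have := Nat.mul_mod s j 2; rw [hj] at this; omega
      have heven : (i + s * j) % 2 = 0 := by omega
      refine ⟨s, by omega, ?_⟩
      have hx : (t₁ * j) % 2 = 1 := by
        have := Nat.mul_mod t₁ j 2; rw [ht₁o, hj] at this; omega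
      have hk : (2 * t₁ * j) % 4 = 2 := by
        have h := mul_assoc 2 t₁ j; omega
      have heven2 : (i + (s + 2 * t₁) * j) % 2 = 0 := by
        have h2 : i + (s + 2 * t₁) * j = (i + s * j) + 2 * t₁ * j := by ring
        omega
      rw [wv_even _ _ heven, wv_even _ _ heven2]
      have h2 : i + (s + 2 * t₁) * j = (i + s * j) + 2 * t₁ * j := by ring
      have : (i + s * j) % 4 = 0 ∧ (i + (s + 2 * t₁) * j) % 4 = 2 ∨
          (i + s * j) % 4 = 2 ∧ (i + (s + 2 * t₁) * j) % 4 = 0 := by omega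
      rcases this with ⟨ha, hb⟩ | ⟨ha, hb⟩ <;> simp [ha, hb]
  · -- t odd : opposite parities
    refine ⟨0, by omega, ?_⟩
    have htj : (t * j) % 2 = 1 := by
      rw [Nat.mul_mod, hj]; rcases ho with ⟨c, hc⟩; omega
    simp only [zero_mul, add_zero, zero_add]
    have hpar : i % 2 ≠ (i + t * j) % 2 := by omega
    rcases Nat.even_or_odd i with ⟨c, hc⟩ | ⟨c, hc⟩
    · have h1 : i % 2 = 0 := by omega
      have h2 : (i + t * j) % 2 = 1 := by omega
      obtain ⟨m, hm⟩ : ∃ m, i + t * j = 2 * m + 1 := ⟨(i + t * j) / 2, by omega⟩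
      rw [wv_even _ _ h1, hm, wv_odd]
      split <;> split <;> simp_all
    · have h1 : i % 2 = 1 := by omega
      have h2 : (i + t * j) % 2 = 0 := by omega
      obtain ⟨m, hm⟩ : ∃ m, i = 2 * m + 1 := ⟨i / 2, by omega⟩
      rw [hm, wv_odd, wv_even _ _ (by omega)]
      split <;> split <;> simp_all

lemma pf_pow (k : ℕ) : ∀ e : ℕ → Bool, pf e (2 ^ k - 1) = e k := by
  induction k with
  | zero => intro e; rw [pf]; simp
  | succ k ih =>
    intro e
    have h : 2 ^ (k + 1) - 1 = 2 * (2 ^ k - 1) + 1 := by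
      have : 1 ≤ 2 ^ k := Nat.one_le_two_pow
      omega
    rw [h, pf_odd, ih]

lemma wv_injective : Function.Injective wv := by
  intro e e' h
  funext k
  have h1 := congrFun h (2 * (2 ^ k - 1) + 1)
  rw [wv_odd, wv_odd, pf_pow, pf_pow] at h1
  cases h2 : e k <;> cases h3 : e' k <;> simp_all

instance : Uncountable (ℕ → Bool) := by
  refine not_countable_iff.mp ?_
  intro h
  have h2 : Countable (ℕ → Prop) :=
    Countable.of_equiv _ (Equiv.arrowCongr (Equiv.refl ℕ) Equiv.propEquivBool).symm
  have h3 : Countable (Set ℕ) := h2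
  obtain ⟨f, hf⟩ := exists_injective_nat (Set ℕ)
  exact Function.cantor_injective f hf

/-- There are uncountably many infinite words over a 4-letter alphabet
containing no squares in any arithmetic progression of odd difference. -/
theorem uncountably_many_words_no_square_in_odd_AP :
    ∃ S : Set (ℕ → Fin 4), ¬ S.Countable ∧
      ∀ w ∈ S, ∀ i j t, Odd j → 1 ≤ t →
        ∃ s < t, w (i + s * j) ≠ w (i + (s + t) * j) := by
  refine ⟨Set.range wv, ?_, ?_⟩
  · intro hc
    have := hc.preimage wv_injective
    rw [Set.preimage_range] at this
    exact not_countable (Set.countable_univ_iff.mp this)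
  · rintro w ⟨e, rfl⟩ i j t hj ht
    exact wv_no_square e i j t (Nat.odd_iff.mp hj) ht
end

section
/- Let v be obtained from a paperfolding word over {1,4} by setting v_{4n}=2, v_{4n+2}=3, v_{2n+1}=f_{2n+1}, and let h be the morphism 1→0110, 2→0101, 3→0001, 4→0111. Then h(v) is an infinite binary word that contains no square xx with |x| ≥ 3 in any arithmetic progression of odd difference. -/
/-- The morphism `1 → 0110`, `2 → 0101`, `3 → 0001`, `4 → 0111`. -/
def hMorph4 (c : ℕ) : List ℕ :=
  if c = 1 then [0, 1, 1, 0] else if c = 2 then [0, 1, 0, 1]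
  else if c = 3 then [0, 0, 0, 1] else [0, 1, 1, 1]

/-- The periodic "skeleton" of the word `h(v)`, as a function of the
position mod 16 (junk value at positions `≡ 7 (mod 8)`). -/
def WD (r : ℕ) : ℕ :=
  if r % 4 = 0 then 0
  else if r % 4 = 1 then (if r = 9 then 0 else 1)
  else if r % 4 = 2 then (if r % 8 = 6 then 1 else 0)
  else 1

/-- Finite search for a skeleton mismatch. -/
def check (a b c bound : ℕ) : Bool :=
  (List.range bound).any fun s =>
    decide ((a + s * b) % 16 % 8 ≠ 7) && decide ((a + (s + c) * b) % 16 % 8 ≠ 7) &&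
      decide (WD ((a + s * b) % 16) ≠ WD ((a + (s + c) * b) % 16))

def checkAllB : Bool :=
  (List.range 16).all fun a => (List.range 16).all fun b =>
    (b % 2 == 0) ||
      (((List.range 16).all fun c => (c < 3) || check a b c c) &&
       ((List.range 16).all fun c => (c == 0) || check a b c 16))

set_option maxRecDepth 40000 in
lemma check_allB : checkAllB = true := by decide

lemma check_all {a b : ℕ} (ha : a < 16) (hb : b < 16) (hodd : b % 2 = 1) :
    (∀ c, 3 ≤ c → c < 16 → check a b c c = true) ∧
    (∀ c, 1 ≤ c → c < 16 → check a b c 16 = true) := by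
  have h := check_allB
  simp only [checkAllB, List.all_eq_true, List.mem_range, Bool.or_eq_true,
    Bool.and_eq_true, beq_iff_eq, decide_eq_true_eq] at h
  rcases h a ha b hb with h | ⟨h1, h2⟩
  · omega
  · exact ⟨fun c h3 hc => by rcases h1 c hc with h' | h'; omega; exact h',
      fun c h0 hc => by rcases h2 c hc with h' | h'; omega; exact h'⟩

def hit7B : Bool :=
  (List.range 8).all fun a => (List.range 8).all fun b =>
    (b % 2 == 0) || (List.range 8).any fun s => (a + s * b) % 8 == 7

lemma hit7B_true : hit7B = true := by decide

lemma hit7 {a b : ℕ} (ha : a < 8) (hb : b < 8) (hodd : b % 2 = 1) :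
    ∃ s < 8, (a + s * b) % 8 = 7 := by
  have h := hit7B_true
  simp only [hit7B, List.all_eq_true, List.any_eq_true, List.mem_range,
    Bool.or_eq_true, beq_iff_eq] at h
  rcases h a ha b hb with h | ⟨s, hs, h⟩
  · omega
  · exact ⟨s, hs, h⟩

/-- The binary word `h(v)` contains no square `xx` with `|x| ≥ 3` in any
arithmetic progression of odd difference. -/
theorem image_no_large_square_in_odd_AP
    (f v w : ℕ → ℕ) (hf : IsPaperfolding14 f)
    (hv0 : ∀ n, v (4 * n) = 2) (hv2 : ∀ n, v (4 * n + 2) = 3)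
    (hv1 : ∀ n, v (2 * n + 1) = f (2 * n + 1))
    (hw : ∀ n, [w (4 * n), w (4 * n + 1), w (4 * n + 2), w (4 * n + 3)]
      = hMorph4 (v n)) :
    ∀ i j t, Odd j → 3 ≤ t →
      ∃ s < t, w (i + s * j) ≠ w (i + (s + t) * j) := by
  obtain ⟨g, a, hg0, hprop⟩ := hf
  intro i j t hj ht3
  have hj2 : j % 2 = 1 := Nat.odd_iff.mp hj
  -- every value of the paperfolding hierarchy is 1 or 4
  have pf_mem : ∀ n k, g k n = 1 ∨ g k n = 4 := by
    intro n
    induction n using Nat.strong_induction_on with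
    | _ n ih =>
      intro k
      rcases (show n % 4 = 0 ∨ n % 4 = 2 ∨ n % 2 = 1 by omega) with h | h | h
      · have e := (hprop k).2.1 (n / 4)
        rw [show 4 * (n / 4) = n by omega] at e
        rw [e]; exact (hprop k).1
      · have e := (hprop k).2.2.1 (n / 4)
        rw [show 4 * (n / 4) + 2 = n by omega] at e
        rw [e]; rcases (hprop k).1 with h' | h' <;> omega
      · have e := (hprop k).2.2.2 (n / 2)
        rw [show 2 * (n / 2) + 1 = n by omega] at e
        rw [← e]; exact ih (n / 2) (by omega) (k + 1)
  -- mismatch at offset ≡ 2 (mod 4) from an even position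
  have pf_neq : ∀ k m Δ, Δ % 4 = 2 → m % 2 = 0 → g k m ≠ g k (m + Δ) := by
    intro k m Δ hΔ hm
    obtain ⟨ha, h0, h2, -⟩ := hprop k
    rcases (show m % 4 = 0 ∨ m % 4 = 2 by omega) with h | h
    · have e1 := h0 (m / 4); rw [show 4 * (m / 4) = m by omega] at e1
      have e2 := h2 ((m + Δ) / 4)
      rw [show 4 * ((m + Δ) / 4) + 2 = m + Δ by omega] at e2
      rw [e1, e2]; rcases ha with h' | h' <;> omega
    · have e1 := h2 (m / 4); rw [show 4 * (m / 4) + 2 = m by omega] at e1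
      have e2 := h0 ((m + Δ) / 4)
      rw [show 4 * ((m + Δ) / 4) = m + Δ by omega] at e2
      rw [e1, e2]; rcases ha with h' | h' <;> omega
  -- the key paperfolding lemma: mismatch along any odd-difference AP
  have pf_AP : ∀ u, 1 ≤ u → ∀ k m0,
      ∃ r < 2 * u, g k (m0 + r * j) ≠ g k (m0 + r * j + 2 * u * j) := by
    intro u
    induction u using Nat.strong_induction_on with
    | _ u ih =>
      intro hu k m0
      rcases (show u % 2 = 1 ∨ u % 2 = 0 by omega) with hodd | heven
      · -- 2*u*j ≡ 2 (mod 4): pick r ∈ {0,1} making m0 + r*j even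
        have huj : (u * j) % 2 = 1 := by
          rw [Nat.mul_mod, hodd, hj2]
        have hΔ : (2 * (u * j)) % 4 = 2 := by omega
        rcases (show m0 % 2 = 0 ∨ m0 % 2 = 1 by omega) with hm | hm
        · refine ⟨0, by omega, ?_⟩
          have := pf_neq k (m0 + 0 * j) (2 * (u * j)) hΔ (by omega)
          have e : 2 * u * j = 2 * (u * j) := by ring
          rw [e]; exact this
        · refine ⟨1, by omega, ?_⟩
          have hmj : (m0 + 1 * j) % 2 = 0 := by omega
          have := pf_neq k (m0 + 1 * j) (2 * (u * j)) hΔ hmj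
          have e : 2 * u * j = 2 * (u * j) := by ring
          rw [e]; exact this
      · -- u even: descend one paperfolding level
        set u' := u / 2 with hu'
        have huu : u = 2 * u' := by omega
        -- pick ε ∈ {0,1} making m0 + ε*j odd
        obtain ⟨ε, hε, hoddm⟩ : ∃ ε ≤ 1, (m0 + ε * j) % 2 = 1 := by
          rcases (show m0 % 2 = 1 ∨ m0 % 2 = 0 by omega) with hm | hm
          · exact ⟨0, by omega, by omega⟩
          · exact ⟨1, le_refl 1, by omega⟩
        obtain ⟨M, hM⟩ : ∃ M, m0 + ε * j = 2 * M + 1 :=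
          ⟨(m0 + ε * j) / 2, by omega⟩
        obtain ⟨r', hr', hne⟩ := ih u' (by omega) (by omega) (k + 1) M
        refine ⟨ε + 2 * r', by
          have hx : (ε + 2 * r') * j = ε * j + 2 * (r' * j) := by ring
          omega, ?_⟩
        have key := (hprop k).2.2.2
        have hx : (ε + 2 * r') * j = ε * j + 2 * (r' * j) := by ring
        have hy : 2 * u * j = 4 * (u' * j) := by rw [huu]; ring
        have hz : 2 * u' * j = 2 * (u' * j) := by ring
        have e1 : g (k + 1) (M + r' * j) = g k (m0 + (ε + 2 * r') * j) := by
          rw [key (M + r' * j)]; congr 1; omega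
        have e2 : g (k + 1) (M + r' * j + 2 * u' * j)
            = g k (m0 + (ε + 2 * r') * j + 2 * u * j) := by
          rw [key (M + r' * j + 2 * u' * j)]; congr 1; omega
        rw [← e1, ← e2]; exact hne
  -- values of v
  have hvodd : ∀ m, v (2 * m + 1) = g 1 m := by
    intro m
    rw [hv1 m, ← hg0, ← (hprop 0).2.2.2 m]
  -- component equations of the image word
  have l0 : ∀ p, p % 4 = 0 → w p = 0 := by
    intro p hp
    have hp4 : p = 4 * (p / 4) := by omega
    have h := hw (p / 4)
    rw [hMorph4] at h
    split_ifs at h <;> (rw [hp4]; exact (List.cons.injEq _ _ _ _).mp h |>.1)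
  have l1 : ∀ p, p % 4 = 1 → w p = if p % 16 = 9 then 0 else 1 := by
    intro p hp
    set n := p / 4 with hn
    have hp4 : p = 4 * n + 1 := by omega
    have h := hw n
    rcases (show n % 4 = 0 ∨ n % 4 = 2 ∨ n % 2 = 1 by omega) with hc | hc | hc
    · have hvn : v n = 2 := by
        have := hv0 (n / 4); rw [show 4 * (n / 4) = n by omega] at this; exact this
      rw [hvn] at h; norm_num [hMorph4] at h
      rw [hp4, h.2.1, if_neg (by omega)]
    · have hvn : v n = 3 := by
        have := hv2 (n / 4); rw [show 4 * (n / 4) + 2 = n by omega] at this; exact this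
      rw [hvn] at h; norm_num [hMorph4] at h
      rw [hp4, h.2.1, if_pos (by omega)]
    · have hvn : v n = g 1 (n / 2) := by
        have := hvodd (n / 2); rw [show 2 * (n / 2) + 1 = n by omega] at this; exact this
      have hne9 : ¬ p % 16 = 9 := by omega
      rcases pf_mem (n / 2) 1 with h14 | h14 <;>
        (rw [h14] at hvn; rw [hvn] at h; norm_num [hMorph4] at h;
         rw [hp4, h.2.1, if_neg (show ¬(4 * n + 1) % 16 = 9 by omega)])
  have l2 : ∀ p, p % 4 = 2 → w p = if p % 8 = 6 then 1 else 0 := by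
    intro p hp
    set n := p / 4 with hn
    have hp4 : p = 4 * n + 2 := by omega
    have h := hw n
    rcases (show n % 4 = 0 ∨ n % 4 = 2 ∨ n % 2 = 1 by omega) with hc | hc | hc
    · have hvn : v n = 2 := by
        have := hv0 (n / 4); rw [show 4 * (n / 4) = n by omega] at this; exact this
      rw [hvn] at h; norm_num [hMorph4] at h
      rw [hp4, h.2.2.1, if_neg (by omega)]
    · have hvn : v n = 3 := by
        have := hv2 (n / 4); rw [show 4 * (n / 4) + 2 = n by omega] at this; exact this
      rw [hvn] at h; norm_num [hMorph4] at h
      rw [hp4, h.2.2.1, if_neg (by omega)]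
    · have hvn : v n = g 1 (n / 2) := by
        have := hvodd (n / 2); rw [show 2 * (n / 2) + 1 = n by omega] at this; exact this
      have h6 : p % 8 = 6 := by omega
      rcases pf_mem (n / 2) 1 with h14 | h14 <;>
        (rw [h14] at hvn; rw [hvn] at h; norm_num [hMorph4] at h;
         rw [hp4, h.2.2.1, if_pos (show (4 * n + 2) % 8 = 6 by omega)])
  have l3 : ∀ p, p % 8 = 3 → w p = 1 := by
    intro p hp
    set n := p / 4 with hn
    have hp4 : p = 4 * n + 3 := by omega
    have h := hw n
    rcases (show n % 4 = 0 ∨ n % 4 = 2 by omega) with hc | hc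
    · have hvn : v n = 2 := by
        have := hv0 (n / 4); rw [show 4 * (n / 4) = n by omega] at this; exact this
      rw [hvn] at h; norm_num [hMorph4] at h
      rw [hp4, h.2.2.2]
    · have hvn : v n = 3 := by
        have := hv2 (n / 4); rw [show 4 * (n / 4) + 2 = n by omega] at this; exact this
      rw [hvn] at h; norm_num [hMorph4] at h
      rw [hp4, h.2.2.2]
  have l7 : ∀ p, p % 8 = 7 → w p = if g 1 ((p - 7) / 8) = 1 then 0 else 1 := by
    intro p hp
    set n := p / 4 with hn
    have hp4 : p = 4 * n + 3 := by omega
    have hodd : n % 2 = 1 := by omega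
    have h := hw n
    have hm : (p - 7) / 8 = n / 2 := by omega
    have hvn : v n = g 1 (n / 2) := by
      have := hvodd (n / 2); rw [show 2 * (n / 2) + 1 = n by omega] at this; exact this
    rw [hm]
    rcases pf_mem (n / 2) 1 with h14 | h14 <;>
      (rw [h14] at hvn; rw [hvn] at h; norm_num [hMorph4] at h)
    · rw [hp4, h.2.2.2, if_pos h14]
    · rw [hp4, h.2.2.2, if_neg (by omega)]
  -- skeleton evaluation
  have lskel : ∀ p, p % 8 ≠ 7 → w p = WD (p % 16) := by
    intro p hp
    have e4 : p % 16 % 4 = p % 4 := Nat.mod_mod_of_dvd p (by norm_num)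
    have e8 : p % 16 % 8 = p % 8 := Nat.mod_mod_of_dvd p (by norm_num)
    rcases (show p % 4 = 0 ∨ p % 4 = 1 ∨ p % 4 = 2 ∨ p % 8 = 3 by omega)
      with h | h | h | h
    · rw [l0 p h, WD, if_pos (show p % 16 % 4 = 0 by omega)]
    · rw [l1 p h, WD, if_neg (show ¬ p % 16 % 4 = 0 by omega),
        if_pos (show p % 16 % 4 = 1 by omega)]
    · rw [l2 p h, WD, if_neg (show ¬ p % 16 % 4 = 0 by omega),
        if_neg (show ¬ p % 16 % 4 = 1 by omega),
        if_pos (show p % 16 % 4 = 2 by omega), e8]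
    · rw [l3 p h, WD, if_neg (show ¬ p % 16 % 4 = 0 by omega),
        if_neg (show ¬ p % 16 % 4 = 1 by omega),
        if_neg (show ¬ p % 16 % 4 = 2 by omega)]
  -- modular transfer lemma
  have m16 : ∀ x u y z : ℕ, x % 16 = u % 16 → y % 16 = z % 16 →
      (x + y * j) % 16 = (u + z * (j % 16)) % 16 := by
    intro x u y z hx hy
    conv_lhs => rw [Nat.add_mod, Nat.mul_mod]
    conv_rhs => rw [Nat.add_mod, Nat.mul_mod]
    rw [hx, hy, Nat.mod_mod_of_dvd j (dvd_refl 16)]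
  have m8of16 : ∀ x : ℕ, x % 16 % 8 = x % 8 := fun x =>
    Nat.mod_mod_of_dvd x (by norm_num)
  by_cases ht16 : t % 16 = 0
  · -- Case B: 16 ∣ t, use the paperfolding structure
    have hu : t = 16 * (t / 16) := by omega
    set u := t / 16 with hudef
    have hu1 : 1 ≤ u := by omega
    obtain ⟨s0, hs0, h7⟩ := hit7 (a := i % 8) (b := j % 8)
      (Nat.mod_lt _ (by norm_num)) (Nat.mod_lt _ (by norm_num)) (by omega)
    have h7' : (i + s0 * j) % 8 = 7 := by
      have : (i + s0 * j) % 8 = (i % 8 + s0 * (j % 8)) % 8 := by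
        conv_lhs => rw [Nat.add_mod, Nat.mul_mod]
        conv_rhs => rw [Nat.add_mod, Nat.mul_mod]
        rw [Nat.mod_mod_of_dvd j (dvd_refl 8), Nat.mod_mod_of_dvd i (dvd_refl 8)]
      omega
    obtain ⟨m0, hm0⟩ : ∃ m0, i + s0 * j = 8 * m0 + 7 := ⟨(i + s0 * j) / 8, by omega⟩
    obtain ⟨r, hr, hne⟩ := pf_AP u hu1 1 m0
    refine ⟨s0 + 8 * r, by
      have hx : (s0 + 8 * r) * j = s0 * j + 8 * (r * j) := by ring
      have : i + s0 * j = 8 * m0 + 7 := hm0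
      nlinarith [hs0, hr, hu1, hj.pos]
      , ?_⟩
    have e1 : i + (s0 + 8 * r) * j = 8 * (m0 + r * j) + 7 := by
      have hx : (s0 + 8 * r) * j = s0 * j + 8 * (r * j) := by ring
      omega
    have e2 : i + (s0 + 8 * r + t) * j = 8 * (m0 + r * j + 2 * u * j) + 7 := by
      have hx : (s0 + 8 * r + t) * j = s0 * j + 8 * (r * j) + t * j := by ring
      have hy : t * j = 16 * (u * j) := by rw [hu]; ring
      have hz : 2 * u * j = 2 * (u * j) := by ring
      omega
    rw [l7 _ (by omega), l7 _ (by rw [e2]; omega)]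
    rw [show (i + (s0 + 8 * r) * j - 7) / 8 = m0 + r * j by omega]
    rw [show (i + (s0 + 8 * r + t) * j - 7) / 8 = m0 + r * j + 2 * u * j by omega]
    rcases pf_mem (m0 + r * j) 1 with ha1 | ha1 <;>
      rcases pf_mem (m0 + r * j + 2 * u * j) 1 with ha2 | ha2 <;>
      simp [ha1, ha2] at hne ⊢
  · -- Case A: skeleton mismatch
    have hchk := check_all (a := i % 16) (b := j % 16)
      (Nat.mod_lt _ (by norm_num)) (Nat.mod_lt _ (by norm_num)) (by omega)
    by_cases htlt : t < 16
    · have hc := hchk.1 t ht3 htlt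
      simp only [check, List.any_eq_true, List.mem_range, Bool.and_eq_true,
        decide_eq_true_eq] at hc
      obtain ⟨s, hs, ⟨h7a, h7b⟩, hWD⟩ := hc
      have e1 : (i + s * j) % 16 = (i % 16 + s * (j % 16)) % 16 :=
        m16 i (i % 16) s s (by omega) rfl
      have e2 : (i + (s + t) * j) % 16 = (i % 16 + (s + t) * (j % 16)) % 16 :=
        m16 i (i % 16) (s + t) (s + t) (by omega) rfl
      refine ⟨s, hs, ?_⟩
      rw [lskel _ (by rw [← m8of16, e1, m8of16]; omega),
        lskel _ (by rw [← m8of16, e2, m8of16]; omega), e1, e2]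
      intro hcon; apply hWD
      rw [← hcon]  -- careful direction
    · have hc := hchk.2 (t % 16) (by omega) (by omega)
      simp only [check, List.any_eq_true, List.mem_range, Bool.and_eq_true,
        decide_eq_true_eq] at hc
      obtain ⟨s, hs, ⟨h7a, h7b⟩, hWD⟩ := hc
      have e1 : (i + s * j) % 16 = (i % 16 + s * (j % 16)) % 16 :=
        m16 i (i % 16) s s (by omega) rfl
      have e2 : (i + (s + t) * j) % 16 = (i % 16 + (s + t % 16) * (j % 16)) % 16 :=
        m16 i (i % 16) (s + t) (s + t % 16) (by omega) (by omega)
      refine ⟨s, by omega, ?_⟩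
      rw [lskel _ (by rw [← m8of16, e1, m8of16]; omega),
        lskel _ (by rw [← m8of16, e2, m8of16]; omega), e1, e2]
      intro hcon; apply hWD
      rw [← hcon]
end

section
/- Suppose u and v are infinite words over a 4-letter alphabet A, each containing no squares in any arithmetic progression of odd difference. Define the 2-dimensional word w over A × A by w_{m,n} = (u_m, v_n). Then every line of w is squarefree: for all i_1, i_2 ≥ 0 and integers j_1, j_2 with gcd(j_1, j_2) = 1, the infinite word x_t = w_{i_1 + j_1 t, i_2 + j_2 t} (t ≥ 0) contains no nonempty square subword. -/
section Words

variable {α β : Type*}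

def SquarefreeSeq (f : ℕ → α) : Prop :=
  ∀ i L, 0 < L → ∃ m < L, f (i + m) ≠ f (i + L + m)

def AvoidsOddAPSquares (c : ℕ → α) : Prop :=
  ∀ i j t, Odd j → 1 ≤ t → ∃ s < t, c (i + s * j) ≠ c (i + (s + t) * j)

theorem SquarefreeSeq.of_comp {f : ℕ → α} (g : α → β) (h : SquarefreeSeq (g ∘ f)) :
    SquarefreeSeq f := fun i L hL =>
  (h i L hL).imp fun _ ⟨hm, hne⟩ => ⟨hm, fun heq => hne (congrArg g heq)⟩

theorem SquarefreeSeq.not_isSubword_append_self {f : ℕ → α} (hf : SquarefreeSeq f)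
    {x : List α} (hx : x ≠ []) : ¬ IsSubword f (x ++ x) := by
  rintro ⟨i, hi⟩
  have hget : ∀ n (h : n < (x ++ x).length), (x ++ x)[n] = f (i + n) := fun n h => by
    rw [List.getElem_of_eq hi h, List.getElem_map, List.getElem_range]
  obtain ⟨m, hm, hne⟩ := hf i x.length (List.length_pos_iff.mpr hx)
  apply hne
  rw [add_assoc, ← hget m (by simp; omega), ← hget (x.length + m) (by simp; omega),
    List.getElem_append_left hm, List.getElem_append_right (by omega)]
  simp

theorem AvoidsOddAPSquares.squarefreeSeq_add_mul {c : ℕ → α} (hc : AvoidsOddAPSquares c)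
    (a : ℕ) {k : ℕ} (hk : Odd k) : SquarefreeSeq fun t => c (a + k * t) := fun i L hL => by
  obtain ⟨s, hs, hne⟩ := hc (a + k * i) k L hk hL
  exact ⟨s, hs, by convert hne using 2 <;> ring⟩

end Words

theorem Int.nonneg_of_forall_nonneg_add_mul {i : ℕ} {j : ℤ}
    (h : ∀ t : ℕ, 0 ≤ (i : ℤ) + j * t) : 0 ≤ j := by
  by_contra! hj
  have := h (i + 1)
  push_cast at this
  nlinarith

theorem Nat.Coprime.odd_or_odd {a b : ℕ} (h : a.Coprime b) : Odd a ∨ Odd b := by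
  by_contra! hab
  simp only [Nat.not_odd_iff_even] at hab
  have := Nat.dvd_gcd hab.1.two_dvd hab.2.two_dvd
  rw [h.gcd_eq_one] at this
  omega

theorem product_word_lines_squarefree_general
    (A : Type*)
    (u v : ℕ → A)
    (hu : ∀ i j t, Odd j → 1 ≤ t → ∃ s < t, u (i + s * j) ≠ u (i + (s + t) * j))
    (hv : ∀ i j t, Odd j → 1 ≤ t → ∃ s < t, v (i + s * j) ≠ v (i + (s + t) * j))
    (w : ℕ → ℕ → A × A) (hw : ∀ m n, w m n = (u m, v n))
    (i₁ i₂ : ℕ) (j₁ j₂ : ℤ) (hgcd : Int.gcd j₁ j₂ = 1)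
    (h₁ : ∀ t : ℕ, 0 ≤ (i₁ : ℤ) + j₁ * t) (h₂ : ∀ t : ℕ, 0 ≤ (i₂ : ℤ) + j₂ * t) :
    ∀ x : List (A × A), x ≠ [] →
      ¬ IsSubword
        (fun t : ℕ => w ((i₁ : ℤ) + j₁ * t).toNat ((i₂ : ℤ) + j₂ * t).toNat)
        (x ++ x) := by
  lift j₁ to ℕ using Int.nonneg_of_forall_nonneg_add_mul h₁
  lift j₂ to ℕ using Int.nonneg_of_forall_nonneg_add_mul h₂
  have hline : (fun t : ℕ => w ((i₁ : ℤ) + j₁ * t).toNat ((i₂ : ℤ) + j₂ * t).toNat) =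
      fun t => (u (i₁ + j₁ * t), v (i₂ + j₂ * t)) := by
    funext t
    rw [hw]
    norm_cast
  rw [hline]
  intro x hx
  rw [Int.gcd_natCast_natCast] at hgcd
  refine SquarefreeSeq.not_isSubword_append_self ?_ hx
  rcases Nat.Coprime.odd_or_odd hgcd with hj | hj
  · exact .of_comp Prod.fst (AvoidsOddAPSquares.squarefreeSeq_add_mul hu i₁ hj)
  · exact .of_comp Prod.snd (AvoidsOddAPSquares.squarefreeSeq_add_mul hv i₂ hj)

/-- If `u` and `v` over a 4-letter alphabet avoid squares in arithmetic
progressions of odd difference, then every line of the 2-dimensional word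
`w_{m,n} = (u_m, v_n)` is squarefree. -/
theorem product_word_lines_squarefree
    (A : Type*) [Fintype A] (hA : Fintype.card A = 4)
    (u v : ℕ → A)
    (hu : ∀ i j t, Odd j → 1 ≤ t → ∃ s < t, u (i + s * j) ≠ u (i + (s + t) * j))
    (hv : ∀ i j t, Odd j → 1 ≤ t → ∃ s < t, v (i + s * j) ≠ v (i + (s + t) * j))
    (w : ℕ → ℕ → A × A) (hw : ∀ m n, w m n = (u m, v n))
    (i₁ i₂ : ℕ) (j₁ j₂ : ℤ) (hgcd : Int.gcd j₁ j₂ = 1)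
    (h₁ : ∀ t : ℕ, 0 ≤ (i₁ : ℤ) + j₁ * t) (h₂ : ∀ t : ℕ, 0 ≤ (i₂ : ℤ) + j₂ * t) :
    ∀ x : List (A × A), x ≠ [] →
      ¬ IsSubword
        (fun t : ℕ => w ((i₁ : ℤ) + j₁ * t).toNat ((i₂ : ℤ) + j₂ * t).toNat)
        (x ++ x) :=
  product_word_lines_squarefree_general A u v hu hv w hw i₁ i₂ j₁ j₂ hgcd h₁ h₂
end
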